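/- arXiv:1107.4442 — 4 statements merged into one kernel-verified Lean document; each statement's English description precedes it below -/
import Mathlib

section
/- For any initial rotor configuration on G, every sequence of cycle pushing moves terminates: after finitely many cycle pushing moves one reaches an acyclic rotor configuration, and no infinite sequence of cycle pushing moves exists. -/
open Function

/-- A strongly connected finite directed multigraph (self-loops and multiple arcs
allowed), given by source and head maps `src, head : E → V`, together with a nonempty
target set `T` and a rotor mechanism at each vertex: `next` is a cyclic ordering of
the arcs emanating from each vertex (it permutes the arcs, preserves the source, and
acts transitively on the arcs emanating from any fixed vertex). -/
structure RotorSystem (V E : Type) [Fintype V] [DecidableEq V] [Fintype E]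
    [DecidableEq E] where
  src : E → V
  head : E → V
  T : Finset V
  T_nonempty : T.Nonempty
  strongly_connected : ∀ v w : V,
    Relation.ReflTransGen (fun a b => ∃ e : E, src e = a ∧ head e = b) v w
  next : E → E
  next_src : ∀ e, src (next e) = src e
  next_bijective : Function.Bijective next
  next_cyclic : ∀ e e', src e = src e' → ∃ k : ℕ, next^[k] e = e'

namespace RotorSystem

variable {V E : Type} [Fintype V] [DecidableEq V] [Fintype E] [DecidableEq E]

/-- The set `V₀ = V - T` of non-target vertices. -/
abbrev V0 (S : RotorSystem V E) : Type := {v : V // v ∉ S.T}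

/-- A rotor configuration: each non-target vertex carries an arc emanating from it. -/
abbrev RConf (S : RotorSystem V E) : Type :=
  {ρ : S.V0 → E // ∀ v : S.V0, S.src (ρ v) = v.1}

/-- A particle configuration: a number of particles at each non-target vertex. -/
abbrev PConf (S : RotorSystem V E) : Type := S.V0 → ℕ

variable (S : RotorSystem V E)

/-- One step of a single particle's rotor walk: at a non-target vertex the rotor is
first progressed and the particle then moves along the new rotor arc; target vertices
absorb the particle. -/
def step (p : V × S.RConf) : V × S.RConf :=
  if h : p.1 ∈ S.T then p
  else
    (S.head (S.next (p.2.1 ⟨p.1, h⟩)),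
      ⟨Function.update p.2.1 ⟨p.1, h⟩ (S.next (p.2.1 ⟨p.1, h⟩)), by
        intro w
        rcases eq_or_ne w ⟨p.1, h⟩ with rfl | hw
        · rw [Function.update_self, S.next_src]
          exact p.2.2 ⟨p.1, h⟩
        · rw [Function.update_of_ne hw]
          exact p.2.2 w⟩)

open Classical in
/-- Route a single particle from `x` by rotor walk until it first reaches the target
set; the result is the pair (final position, final rotor configuration). -/
noncomputable def route (x : V) (ρ : S.RConf) : V × S.RConf :=
  if h : ∃ n, (S.step^[n] (x, ρ)).1 ∈ S.T then S.step^[Nat.find h] (x, ρ) else (x, ρ)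

/-- `t_x(ρ)`: the target vertex reached by a single particle started at `x` with
initial rotor configuration `ρ`. -/
noncomputable def tgt (x : V) (ρ : S.RConf) : V := (S.route x ρ).1

/-- The particle addition operator `E_v`: add one particle at `v` and route it to the
target set. -/
noncomputable def addAt (v : S.V0) (ρ : S.RConf) : S.RConf := (S.route v.1 ρ).2

/-- The action `σρ` of a particle configuration on a rotor configuration: place
`σ v` particles at each vertex `v` and route them all to the target set. -/
noncomputable def act (σ : S.PConf) (ρ : S.RConf) : S.RConf :=
  (Finset.univ : Finset S.V0).toList.foldr (fun v r => (S.addAt v)^[σ v] r) ρ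

/-- Equivalence of rotor configurations: `ρ ≡ ρ'` iff `σρ = σρ'` for some particle
configuration `σ`. -/
def REquiv (ρ ρ' : S.RConf) : Prop := ∃ σ : S.PConf, S.act σ ρ = S.act σ ρ'

/-- The outdegree `d(v)`. -/
def outdeg (v : V) : ℕ := (Finset.univ.filter fun e : E => S.src e = v).card

/-- The number `d(v,w)` of arcs from `v` to `w`. -/
def numArcs (v w : V) : ℕ :=
  (Finset.univ.filter fun e : E => S.src e = v ∧ S.head e = w).card

/-- A particle configuration is stable if every non-target vertex holds at most
`d(v) - 1` particles. -/
def IsStable (σ : S.PConf) : Prop := ∀ v : S.V0, σ v < S.outdeg v.1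

/-- Parallel toppling: every unstable vertex topples once, sending one particle along
each arc emanating from it. -/
def toppleStep (σ : S.PConf) : S.PConf := fun v =>
  (if S.outdeg v.1 ≤ σ v then σ v - S.outdeg v.1 else σ v) +
    ∑ w : S.V0, (if S.outdeg w.1 ≤ σ w then S.numArcs w.1 v.1 else 0)

open Classical in
/-- The stabilization `σ°` of a particle configuration. -/
noncomputable def stabilize (σ : S.PConf) : S.PConf :=
  if h : ∃ n, S.IsStable (S.toppleStep^[n] σ) then S.toppleStep^[Nat.find h] σ else σ

/-- A stable particle configuration is recurrent if it is reachable (by adding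
particles and stabilizing) from every particle configuration.  The recurrent
configurations form the sandpile group `S(G/T)` under addition-then-stabilization. -/
def IsRecurrent (τ : S.PConf) : Prop :=
  S.IsStable τ ∧ ∀ σ : S.PConf, ∃ τ' : S.PConf, τ = S.stabilize (τ' + σ)

/-- `e` is the identity element of the sandpile group `S(G/T)`. -/
def IsSandpileIdentity (e : S.PConf) : Prop :=
  S.IsRecurrent e ∧ ∀ τ : S.PConf, S.IsRecurrent τ → S.stabilize (e + τ) = τ

/-- The rotor arcs of `ρ`, as a relation on vertices. -/
def rotorRel (ρ : S.RConf) (a b : V) : Prop :=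
  ∃ h : a ∉ S.T, S.head (ρ.1 ⟨a, h⟩) = b

/-- A rotor configuration is acyclic if its rotor arcs contain no directed cycle. -/
def IsAcyclicConf (ρ : S.RConf) : Prop :=
  ∀ v : V, ¬ Relation.TransGen (S.rotorRel ρ) v v

/-- `ρ'` is obtained from `ρ` by pushing a cycle: there are distinct non-target
vertices `v_0, …, v_{r-1}` with the rotor arc of `v_j` pointing to `v_{j+1}`
(cyclically); each such rotor is regressed one step, other rotors are unchanged. -/
def IsCyclePush (ρ ρ' : S.RConf) : Prop :=
  ∃ r : ℕ, 0 < r ∧ ∃ f : ZMod r → S.V0, Function.Injective f ∧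
    (∀ j : ZMod r, S.head (ρ.1 (f j)) = (f (j + 1)).1) ∧
    (∀ j : ZMod r, S.next (ρ'.1 (f j)) = ρ.1 (f j)) ∧
    (∀ v : S.V0, v ∉ Set.range f → ρ'.1 v = ρ.1 v)

end RotorSystem

/-!
A cycle of `ρ` is a periodic orbit, avoiding the targets, of the map following the rotor arcs,
so a cycle can be pushed exactly when `ρ` is not acyclic.

In an infinite sequence of pushes some vertex `v` is pushed infinitely often. Every push of `v`
regresses its rotor by one step, so at infinitely many push times the rotor of `v` points along
any given arc out of `v`; the head of that arc lies on the same cycle and is pushed too. Hence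
the set of vertices pushed infinitely often is nonempty and closed under out-arcs, so by strong
connectivity it contains a target, which carries no rotor.
-/

open Filter

theorem Relation.TransGen.exists_pos_iterate_eq {α : Type*} {R : α → α → Prop} {F : α → α}
    (hR : ∀ a b, R a b → F a = b) {a b : α} (h : Relation.TransGen R a b) :
    ∃ n > 0, F^[n] a = b := by
  induction h with
  | single hab => exact ⟨1, one_pos, hR _ _ hab⟩
  | tail _ hbc ih =>
    obtain ⟨n, -, hn⟩ := ih
    exact ⟨n + 1, n.succ_pos, by rw [iterate_succ_apply', hn, hR _ _ hbc]⟩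

theorem Relation.transGen_self_of_cyclic {α : Type*} {R : α → α → Prop} {r : ℕ} (hr : 0 < r)
    (g : ZMod r → α) (hg : ∀ j, R (g j) (g (j + 1))) : Relation.TransGen R (g 0) (g 0) := by
  have hchain : ∀ k : ℕ, Relation.TransGen R (g 0) (g ((k + 1 : ℕ) : ZMod r)) := by
    intro k
    induction k with
    | zero => exact .single (by simpa using hg 0)
    | succ k ih => exact ih.tail (by simpa using hg ((k + 1 : ℕ) : ZMod r))
  simpa [Nat.sub_add_cancel hr] using hchain (r - 1)

namespace Function

variable {α : Type*} {f : α → α} {x : α}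

theorem iterate_eq_self_of_isFixedPt_iterate (hx : x ∈ periodicPts f) {n : ℕ}
    (hfix : IsFixedPt f (f^[n] x)) : f^[n] x = x := by
  have hx1 : minimalPeriod f x = 1 := by
    rw [← minimalPeriod_apply_iterate hx n, minimalPeriod_eq_one_iff_isFixedPt]
    exact hfix
  exact iterate_fixed (minimalPeriod_eq_one_iff_isFixedPt.1 hx1) n

theorem iterate_zmod_val_add_one [NeZero (minimalPeriod f x)] (j : ZMod (minimalPeriod f x)) :
    f^[(j + 1).val] x = f (f^[j.val] x) := by
  rw [← iterate_succ_apply' f, ← iterate_mod_minimalPeriod_eq (n := j.val + 1),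
    ← ZMod.val_natCast, Nat.cast_succ, ZMod.natCast_zmod_val]

theorem injective_iterate_zmod_val [NeZero (minimalPeriod f x)] :
    Injective fun j : ZMod (minimalPeriod f x) => f^[j.val] x := fun _ _ h =>
  ZMod.val_injective _ (iterate_injOn_Iio_minimalPeriod (ZMod.val_lt _) (ZMod.val_lt _) h)

end Function

section

variable {α : Type*} {σ : α → α} {s : ℕ → α} {p : ℕ → Prop}

theorem exists_ge_and_eq_of_frequently (hp : ∃ᶠ n in atTop, p n)
    (hstay : ∀ n, ¬ p n → s (n + 1) = s n) (N : ℕ) : ∃ n ≥ N, p n ∧ s n = s N := by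
  suffices hgap : ∀ d N, p (N + d) → ∃ n ≥ N, p n ∧ s n = s N by
    obtain ⟨n, hn, hpn⟩ := frequently_atTop.1 hp N
    exact hgap (n - N) N (by rwa [Nat.add_sub_cancel' hn])
  intro d
  induction d with
  | zero => exact fun N hN => ⟨N, le_rfl, hN, rfl⟩
  | succ d ih =>
    intro N hp
    by_cases hN : p N
    · exact ⟨N, le_rfl, hN, rfl⟩
    obtain ⟨n, hn, hpn, hsn⟩ := ih (N + 1) (by rwa [Nat.add_right_comm, Nat.add_assoc])
    exact ⟨n, by omega, hpn, hsn.trans (hstay N hN)⟩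

theorem frequently_and_eq_of_iterate_eq (hσ : Injective σ) (hp : ∃ᶠ n in atTop, p n)
    (hmove : ∀ n, p n → σ (s (n + 1)) = s n) (hstay : ∀ n, ¬ p n → s (n + 1) = s n) {e : α}
    (horbit : ∀ N, ∃ k, σ^[k] e = s N) : ∃ᶠ n in atTop, p n ∧ s n = e := by
  have hreturn := exists_ge_and_eq_of_frequently hp hstay
  have hvisit : ∀ k N e, σ^[k] e = s N → ∃ n ≥ N, p n ∧ s n = e := by
    intro k
    induction k with
    | zero => rintro N e rfl; exact hreturn N
    | succ k ih =>
      intro N e he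
      obtain ⟨m, hm, hpm, hsm⟩ := ih N (σ e) (by rwa [← iterate_succ_apply])
      have hsucc : s (m + 1) = e := hσ ((hmove m hpm).trans hsm)
      obtain ⟨n, hn, hpn, hsn⟩ := hreturn (m + 1)
      exact ⟨n, by omega, hpn, hsn.trans hsucc⟩
  exact frequently_atTop.2 fun N => (horbit N).elim fun k hk => hvisit k N e hk

end

namespace RotorSystem

variable {V E : Type} [Fintype V] [DecidableEq V] [Fintype E] [DecidableEq E]
  (S : RotorSystem V E)

/-- The arc `e⁻` preceding `e` in the rotor order. -/
noncomputable def prev (e : E) : E := (Equiv.ofBijective S.next S.next_bijective).symm e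

theorem next_prev (e : E) : S.next (S.prev e) = e :=
  (Equiv.ofBijective S.next S.next_bijective).apply_symm_apply e

theorem src_prev (e : E) : S.src (S.prev e) = S.src e := by
  rw [← S.next_src, next_prev]

def rotorMap (ρ : S.RConf) (w : V) : V := if h : w ∈ S.T then w else S.head (ρ.1 ⟨w, h⟩)

theorem rotorMap_of_mem {ρ : S.RConf} {w : V} (h : w ∈ S.T) : S.rotorMap ρ w = w := dif_pos h

theorem rotorMap_of_notMem {ρ : S.RConf} {w : V} (h : w ∉ S.T) :
    S.rotorMap ρ w = S.head (ρ.1 ⟨w, h⟩) := dif_neg h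

theorem rotorMap_eq_of_rotorRel {ρ : S.RConf} {a b : V} (h : S.rotorRel ρ a b) :
    S.rotorMap ρ a = b := by
  obtain ⟨ha, rfl⟩ := h
  exact S.rotorMap_of_notMem ha

open Classical in
noncomputable def regress (ρ : S.RConf) (C : Set S.V0) : S.RConf :=
  ⟨fun w => if w ∈ C then S.prev (ρ.1 w) else ρ.1 w, fun w => by
    dsimp only
    split_ifs
    · rw [src_prev, ρ.2]
    · exact ρ.2 w⟩

/-- A cycle push is the case where `C` is a cycle. -/
def IsClosedPush (ρ ρ' : S.RConf) (C : Set S.V0) : Prop :=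
  (∀ v ∈ C, ∃ h : S.head (ρ.1 v) ∉ S.T, ⟨S.head (ρ.1 v), h⟩ ∈ C) ∧
    (∀ v ∈ C, S.next (ρ'.1 v) = ρ.1 v) ∧ ∀ v ∉ C, ρ'.1 v = ρ.1 v

variable {S}

theorem IsCyclePush.exists_isClosedPush {ρ ρ' : S.RConf} (h : S.IsCyclePush ρ ρ') :
    ∃ C : Set S.V0, C.Nonempty ∧ S.IsClosedPush ρ ρ' C := by
  obtain ⟨r, -, f, -, hcyc, hnext, hoff⟩ := h
  refine ⟨Set.range f, Set.range_nonempty f, ?_, ?_, hoff⟩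
  · rintro _ ⟨j, rfl⟩
    exact ⟨(hcyc j).symm ▸ (f (j + 1)).2, j + 1, Subtype.ext (hcyc j).symm⟩
  · rintro _ ⟨j, rfl⟩
    exact hnext j

theorem IsCyclePush.not_isAcyclicConf {ρ ρ' : S.RConf} (h : S.IsCyclePush ρ ρ') :
    ¬ S.IsAcyclicConf ρ := by
  obtain ⟨r, hr, f, -, hcyc, -⟩ := h
  exact fun hacyc => hacyc _ <|
    Relation.transGen_self_of_cyclic hr (fun j => (f j).1) fun j => ⟨(f j).2, hcyc j⟩

theorem exists_isCyclePush_of_periodicPt {ρ : S.RConf} {v : V}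
    (hper : v ∈ periodicPts (S.rotorMap ρ)) (hv : v ∉ S.T) :
    ∃ ρ' : S.RConf, S.IsCyclePush ρ ρ' := by
  set F := S.rotorMap ρ
  have hr : 0 < minimalPeriod F v := minimalPeriod_pos_of_mem_periodicPts hper
  have : NeZero (minimalPeriod F v) := ⟨hr.ne'⟩
  have horbit : ∀ n, F^[n] v ∉ S.T := fun n hn =>
    hv (iterate_eq_self_of_isFixedPt_iterate hper (S.rotorMap_of_mem hn) ▸ hn)
  set f : ZMod (minimalPeriod F v) → S.V0 := fun j => ⟨F^[j.val] v, horbit j.val⟩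
  have hf : Injective f := fun _ _ hij => injective_iterate_zmod_val (congrArg Subtype.val hij)
  refine ⟨S.regress ρ (Set.range f), _, hr, f, hf, fun j => ?_, fun j => ?_, fun w hw => ?_⟩
  · rw [← S.rotorMap_of_notMem]
    exact (iterate_zmod_val_add_one j).symm
  · simp only [regress, Set.mem_range_self, if_true, next_prev]
  · simp only [regress, hw, if_false]

theorem exists_isCyclePush_of_not_isAcyclicConf {ρ : S.RConf} (h : ¬ S.IsAcyclicConf ρ) :
    ∃ ρ' : S.RConf, S.IsCyclePush ρ ρ' := by
  obtain ⟨v, hv⟩ := not_forall_not.1 h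
  obtain ⟨-, ⟨hvT, -⟩, -⟩ := Relation.TransGen.head'_iff.1 hv
  obtain ⟨n, hn, hper⟩ := hv.exists_pos_iterate_eq fun _ _ h => S.rotorMap_eq_of_rotorRel h
  exact exists_isCyclePush_of_periodicPt (mk_mem_periodicPts hn hper) hvT

variable {g : ℕ → S.RConf} {C : ℕ → Set S.V0}

theorem frequently_mem_head_of_isClosedPush (hC : ∀ n, S.IsClosedPush (g n) (g (n + 1)) (C n))
    {v : S.V0} (hv : ∃ᶠ n in atTop, v ∈ C n) {e : E} (he : S.src e = v.1) :
    ∃ h : S.head e ∉ S.T, ∃ᶠ n in atTop, ⟨S.head e, h⟩ ∈ C n := by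
  have hrot : ∃ᶠ n in atTop, v ∈ C n ∧ (g n).1 v = e :=
    frequently_and_eq_of_iterate_eq S.next_bijective.1 hv (fun n hn => (hC n).2.1 v hn)
      (fun n hn => (hC n).2.2 v hn) fun N => S.next_cyclic e _ (he.trans ((g N).2 v).symm)
  obtain ⟨n, hn, rfl⟩ := hrot.exists
  refine ⟨((hC n).1 v hn).1, hrot.mono ?_⟩
  rintro m ⟨hm, hme⟩
  obtain ⟨_, hmem⟩ := (hC m).1 v hm
  simpa only [hme] using hmem

theorem not_forall_isClosedPush (hne : ∀ n, (C n).Nonempty) :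
    ¬ ∀ n, S.IsClosedPush (g n) (g (n + 1)) (C n) := by
  intro hC
  obtain ⟨v, hv⟩ : ∃ v, ∃ᶠ n in atTop, v ∈ C n :=
    frequently_exists.1 (Frequently.of_forall hne)
  have hreach : ∀ w, Relation.ReflTransGen (fun a b => ∃ e, S.src e = a ∧ S.head e = b) v.1 w →
      ∃ h : w ∉ S.T, ∃ᶠ n in atTop, ⟨w, h⟩ ∈ C n := by
    intro w hw
    induction hw with
    | refl => exact ⟨v.2, hv⟩
    | tail _ hab ih =>
      obtain ⟨e, he, rfl⟩ := hab
      obtain ⟨h, hfreq⟩ := ih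
      exact frequently_mem_head_of_isClosedPush hC hfreq he
  obtain ⟨t, ht⟩ := S.T_nonempty
  exact (hreach t (S.strongly_connected v.1 t)).1 ht

theorem not_exists_seq_isCyclePush :
    ¬ ∃ g : ℕ → S.RConf, ∀ n, S.IsCyclePush (g n) (g (n + 1)) := by
  rintro ⟨g, hg⟩
  choose C hne hC using fun n => (hg n).exists_isClosedPush
  exact not_forall_isClosedPush hne hC

end RotorSystem

/-- **Lemma (cycle pushing terminates).**
There is no infinite sequence of cycle pushing moves; moreover a rotor configuration
admits a cycle pushing move if and only if it is not acyclic, so that any maximal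
sequence of cycle pushing moves reaches an acyclic configuration in finitely many
steps. -/
theorem cyclePush_terminates {V E : Type} [Fintype V] [DecidableEq V] [Fintype E]
    [DecidableEq E] (S : RotorSystem V E) :
    (¬ ∃ g : ℕ → S.RConf, ∀ n, S.IsCyclePush (g n) (g (n + 1))) ∧
    (∀ ρ : S.RConf, ¬ S.IsAcyclicConf ρ → ∃ ρ' : S.RConf, S.IsCyclePush ρ ρ') ∧
    (∀ ρ : S.RConf, S.IsAcyclicConf ρ → ¬ ∃ ρ' : S.RConf, S.IsCyclePush ρ ρ') :=
  ⟨RotorSystem.not_exists_seq_isCyclePush,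
    fun _ => RotorSystem.exists_isCyclePush_of_not_isAcyclicConf,
    fun _ hacyc ⟨_, hpush⟩ => hpush.not_isAcyclicConf hacyc⟩
end

section
/- If ρ1 and ρ2 are equivalent rotor configurations on G (ρ1 ≡ ρ2), then for every vertex v ∈ V0, a single particle performing rotor walk started at v with initial rotor configuration ρ1 reaches the same target vertex as a particle started at v with initial rotor configuration ρ2: t_v(ρ1) = t_v(ρ2). -/
/-!
Call two rotor configurations push-equivalent if a chain of cycle pushes (`IsCyclePush`) and
their inverses links them. A cycle push does not change where a particle goes: if the walk meets
the pushed cycle, it runs once around it and from then on coincides with the walk in the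
unpushed configuration; otherwise the two walks agree step by step and the cycle is still pushed
at the end. So routing a particle respects push-equivalence and preserves the target.

It remains to see that `ρ₁ ≡ ρ₂` forces push-equivalence, i.e. that adding a particle at `w` is
injective on the finite set of push-equivalence classes. It is surjective there: pushing cycles
lowers a lexicographic potential built from the distances to `T`, so every class contains an
acyclic configuration; and an acyclic configuration is what adding a particle at `w` produces
from the same configuration with the rotors along its path from `w` to `T` regressed.
-/

open Function

namespace RotorSystem

open Filter

variable {V E : Type} [Fintype V] [DecidableEq V] [Fintype E] [DecidableEq E]
  (S : RotorSystem V E)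

noncomputable def prevArc (e : E) : E := (Equiv.ofBijective S.next S.next_bijective).symm e

lemma next_prevArc (e : E) : S.next (S.prevArc e) = e :=
  (Equiv.ofBijective S.next S.next_bijective).apply_symm_apply e

lemma prevArc_next (e : E) : S.prevArc (S.next e) = e :=
  (Equiv.ofBijective S.next S.next_bijective).symm_apply_apply e

lemma src_prevArc (e : E) : S.src (S.prevArc e) = S.src e := by
  rw [← S.next_src, next_prevArc]

section Walk

variable {S}

lemma step_of_mem {x : V} (hx : x ∈ S.T) (ρ : S.RConf) : S.step (x, ρ) = (x, ρ) := by
  simp [step, hx]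

lemma iterate_step_of_mem {x : V} (hx : x ∈ S.T) (ρ : S.RConf) (n : ℕ) :
    S.step^[n] (x, ρ) = (x, ρ) :=
  Function.iterate_fixed (step_of_mem hx ρ) n

lemma step_fst (v : S.V0) (ρ : S.RConf) :
    (S.step (v.1, ρ)).1 = S.head (S.next (ρ.1 v)) := by
  simp [step, v.2]

lemma step_snd (v : S.V0) (ρ : S.RConf) :
    (S.step (v.1, ρ)).2.1 = Function.update ρ.1 v (S.next (ρ.1 v)) := by
  simp [step, v.2]

lemma rotor_iterate_step_of_forall_ne {p : V × S.RConf} {v : S.V0} {n m : ℕ}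
    (hne : ∀ k, n ≤ k → k < n + m → (S.step^[k] p).1 ≠ v.1) :
    (S.step^[n + m] p).2.1 v = (S.step^[n] p).2.1 v := by
  induction m with
  | zero => rfl
  | succ m ih =>
    rw [← add_assoc, Function.iterate_succ_apply', ← ih fun k hk hk' => hne k hk (by omega)]
    by_cases hT : (S.step^[n + m] p).1 ∈ S.T
    · rw [show S.step^[n + m] p = ((S.step^[n + m] p).1, (S.step^[n + m] p).2) from rfl,
        step_of_mem hT]
    · have hw := hne (n + m) (by omega) (by omega)
      set w : S.V0 := ⟨_, hT⟩
      rw [show S.step^[n + m] p = (w.1, (S.step^[n + m] p).2) from rfl, step_snd,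
        Function.update_of_ne fun h => hw (congrArg Subtype.val h).symm]

/-- The rotor at `v` advances exactly once between consecutive visits to `v`. -/
lemma exists_visit_rotor_eq_next_iterate {p : V × S.RConf} {v : S.V0}
    (hinf : ∃ᶠ n in atTop, (S.step^[n] p).1 = v.1) {n₀ : ℕ} (hn₀ : (S.step^[n₀] p).1 = v.1)
    (m : ℕ) : ∃ n ≥ n₀, (S.step^[n] p).1 = v.1 ∧
      (S.step^[n] p).2.1 v = S.next^[m] ((S.step^[n₀] p).2.1 v) := by
  classical
  induction m with
  | zero => exact ⟨n₀, le_rfl, hn₀, rfl⟩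
  | succ m ih =>
    obtain ⟨n, hn, hvn, hrot⟩ := ih
    have hex : ∃ k, (S.step^[n + 1 + k] p).1 = v.1 := by
      obtain ⟨n', hn', h'⟩ := frequently_atTop.mp hinf (n + 1)
      exact ⟨n' - (n + 1), by rwa [Nat.add_sub_cancel' hn']⟩
    refine ⟨n + 1 + Nat.find hex, by omega, Nat.find_spec hex, ?_⟩
    rw [rotor_iterate_step_of_forall_ne fun k hk hk' h =>
      Nat.find_min hex (show k - (n + 1) < Nat.find hex by omega)
        (by rwa [Nat.add_sub_cancel' hk]),
      Function.iterate_succ_apply', show S.step^[n] p = (v.1, (S.step^[n] p).2) from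
        Prod.ext hvn rfl, step_snd, Function.update_self, hrot,
      ← Function.iterate_succ_apply' S.next]

lemma frequently_step_fst_eq_head {p : V × S.RConf} {v : S.V0}
    (hinf : ∃ᶠ n in atTop, (S.step^[n] p).1 = v.1) {e : E} (he : S.src e = v.1) :
    ∃ᶠ n in atTop, (S.step^[n] p).1 = S.head e := by
  refine frequently_atTop.mpr fun N => ?_
  obtain ⟨n₀, hn₀N, hn₀⟩ := frequently_atTop.mp hinf N
  set a := (S.step^[n₀] p).2.1 v
  obtain ⟨k, hk⟩ := S.next_cyclic (S.next a) e (by rw [S.next_src, (S.step^[n₀] p).2.2, he])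
  obtain ⟨n, hn, hvn, hrot⟩ := exists_visit_rotor_eq_next_iterate hinf hn₀ k
  refine ⟨n + 1, by omega, ?_⟩
  rw [Function.iterate_succ_apply', show S.step^[n] p = (v.1, (S.step^[n] p).2) from
      Prod.ext hvn rfl, step_fst, hrot, ← Function.iterate_succ_apply' S.next,
    Function.iterate_succ_apply, hk]

end Walk

/-- The vertices visited infinitely often would form a nonempty set closed under out-arcs,
which by strong connectivity contains a target vertex. -/
theorem exists_iterate_step_mem (p : V × S.RConf) : ∃ n, (S.step^[n] p).1 ∈ S.T := by
  by_contra! hnot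
  obtain ⟨v, hv⟩ := Finite.exists_infinite_fiber fun n => (S.step^[n] p).1
  have hinf : ∃ᶠ n in atTop, (S.step^[n] p).1 = v :=
    Nat.frequently_atTop_iff_infinite.mpr (Set.infinite_coe_iff.mp hv)
  clear hv
  obtain ⟨t, ht⟩ := S.T_nonempty
  suffices ∃ᶠ n in atTop, (S.step^[n] p).1 = t by
    obtain ⟨n, hn⟩ := this.exists
    exact hnot n (hn ▸ ht)
  induction S.strongly_connected v t using Relation.ReflTransGen.head_induction_on with
  | refl => exact hinf
  | head hab _ ih =>
    obtain ⟨e, rfl, rfl⟩ := hab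
    obtain ⟨n, hn⟩ := hinf.exists
    exact ih (frequently_step_fst_eq_head (v := ⟨S.src e, hn ▸ hnot n⟩) hinf rfl)

open Classical in
lemma route_eq_iterate_of_mem {x : V} {ρ : S.RConf} {n : ℕ}
    (hn : (S.step^[n] (x, ρ)).1 ∈ S.T) : S.route x ρ = S.step^[n] (x, ρ) := by
  have hex : ∃ n, (S.step^[n] (x, ρ)).1 ∈ S.T := ⟨n, hn⟩
  obtain ⟨k, rfl⟩ := Nat.exists_eq_add_of_le' (Nat.find_le (h := hex) hn)
  rw [route, dif_pos hex, Function.iterate_add_apply,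
    show S.step^[Nat.find hex] (x, ρ) = ((S.step^[Nat.find hex] (x, ρ)).1, _) from rfl,
    iterate_step_of_mem (Nat.find_spec hex)]

lemma route_of_mem {x : V} (hx : x ∈ S.T) (ρ : S.RConf) : S.route x ρ = (x, ρ) :=
  S.route_eq_iterate_of_mem (n := 0) hx

lemma route_iterate_step (x : V) (ρ : S.RConf) (n : ℕ) :
    S.route (S.step^[n] (x, ρ)).1 (S.step^[n] (x, ρ)).2 = S.route x ρ := by
  obtain ⟨m, hm⟩ := S.exists_iterate_step_mem (S.step^[n] (x, ρ))
  have hm' : (S.step^[m + n] (x, ρ)).1 ∈ S.T := by rwa [Function.iterate_add_apply]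
  rw [S.route_eq_iterate_of_mem hm, S.route_eq_iterate_of_mem hm', Function.iterate_add_apply]

open Classical in
noncomputable def regressOn (ν : S.RConf) (P : Set V) : S.RConf :=
  ⟨fun v => if v.1 ∈ P then S.prevArc (ν.1 v) else ν.1 v, fun v => by
    dsimp only
    split_ifs <;> simp only [src_prevArc, ν.2]⟩

lemma regressOn_apply_of_mem (ν : S.RConf) {P : Set V} {v : S.V0} (hv : v.1 ∈ P) :
    (S.regressOn ν P).1 v = S.prevArc (ν.1 v) :=
  if_pos hv

lemma regressOn_apply_of_not_mem (ν : S.RConf) {P : Set V} {v : S.V0} (hv : v.1 ∉ P) :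
    (S.regressOn ν P).1 v = ν.1 v :=
  if_neg hv

lemma step_regressOn_insert (ν : S.RConf) {P : Set V} {a : S.V0} (ha : a.1 ∉ P) :
    S.step (a.1, S.regressOn ν (insert a.1 P)) = (S.head (ν.1 a), S.regressOn ν P) := by
  have hrot := S.regressOn_apply_of_mem ν (Set.mem_insert a.1 P)
  refine Prod.ext (by rw [step_fst, hrot, next_prevArc]) (Subtype.ext ?_)
  rw [step_snd, hrot, next_prevArc]
  funext v
  by_cases hv : v = a
  · subst hv
    rw [Function.update_self, S.regressOn_apply_of_not_mem ν ha]
  · have hv' : v.1 ≠ a.1 := Subtype.val_injective.ne hv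
    rw [Function.update_of_ne hv]
    by_cases hP : v.1 ∈ P
    · rw [S.regressOn_apply_of_mem ν hP, S.regressOn_apply_of_mem ν (Set.mem_insert_of_mem _ hP)]
    · rw [S.regressOn_apply_of_not_mem ν hP,
        S.regressOn_apply_of_not_mem ν fun h => (Set.mem_insert_iff.mp h).elim hv' hP]

lemma iterate_step_regressOn {ν : S.RConf} {u : ℕ → V} {s : ℕ}
    (hpath : ∀ i < s, S.rotorRel ν (u i) (u (i + 1)))
    (hinj : ∀ i j, i < j → j < s → u i ≠ u j) :
    S.step^[s] (u 0, S.regressOn ν (u '' Set.Iio s)) = (u s, ν) := by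
  induction s generalizing u with
  | zero =>
    refine Prod.ext rfl (Subtype.ext (funext fun v => S.regressOn_apply_of_not_mem ν ?_))
    simp
  | succ s ih =>
    obtain ⟨hu₀, hhead⟩ := hpath 0 (Nat.succ_pos s)
    have hpath_succ : u '' Set.Iio (s + 1) = insert (u 0) ((u ∘ Nat.succ) '' Set.Iio s) := by
      ext x
      simp only [Set.mem_image, Set.mem_Iio, Set.mem_insert_iff, Function.comp_apply]
      constructor
      · rintro ⟨_ | i, hi, rfl⟩
        exacts [Or.inl rfl, Or.inr ⟨i, by omega, rfl⟩]
      · rintro (rfl | ⟨i, hi, rfl⟩)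
        exacts [⟨0, by omega, rfl⟩, ⟨i + 1, by omega, rfl⟩]
    have hu₀_notMem : u 0 ∉ (u ∘ Nat.succ) '' Set.Iio s := by
      rintro ⟨i, hi, hiu⟩
      exact hinj 0 (i + 1) (Nat.succ_pos i) (by simp at hi; omega) hiu.symm
    rw [Function.iterate_succ_apply, hpath_succ,
      S.step_regressOn_insert ν (a := ⟨u 0, hu₀⟩) hu₀_notMem, hhead]
    exact ih (u := u ∘ Nat.succ) (fun i hi => hpath (i + 1) (by omega))
      (fun i j hij hjs => hinj (i + 1) (j + 1) (by omega) (by omega))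

/-- `IsCyclePush κ κ'` unfolds to `∃ r, 0 < r ∧ ∃ f, Injective f ∧ IsCyclePushAlong f κ κ'`. -/
def IsCyclePushAlong {r : ℕ} (f : ZMod r → S.V0) (κ κ' : S.RConf) : Prop :=
  (∀ j, S.head (κ.1 (f j)) = (f (j + 1)).1) ∧ (∀ j, S.next (κ'.1 (f j)) = κ.1 (f j)) ∧
    ∀ v, v ∉ Set.range f → κ'.1 v = κ.1 v

def PushEquiv : S.RConf → S.RConf → Prop := Relation.EqvGen S.IsCyclePush

namespace IsCyclePushAlong

variable {S} {r : ℕ} {f : ZMod r → S.V0} {κ κ' : S.RConf}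

lemma eq_regressOn (h : S.IsCyclePushAlong f κ κ') :
    κ' = S.regressOn κ (Set.range fun j => (f j).1) := by
  ext v
  by_cases hv : v ∈ Set.range f
  · obtain ⟨j, rfl⟩ := hv
    rw [S.regressOn_apply_of_mem κ (Set.mem_range_self (f := fun j => (f j).1) j),
      ← h.2.1 j, prevArc_next]
  · have hv' : v.1 ∉ Set.range fun j => (f j).1 := fun ⟨j, hj⟩ => hv ⟨j, Subtype.ext hj⟩
    rw [S.regressOn_apply_of_not_mem κ hv', h.2.2 v hv]

lemma iterate_step_cycle (hr : 0 < r) (hinj : Function.Injective f)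
    (h : S.IsCyclePushAlong f κ κ') (j₀ : ZMod r) :
    S.step^[r] ((f j₀).1, κ') = ((f j₀).1, κ) := by
  have : NeZero r := ⟨hr.ne'⟩
  set u : ℕ → V := fun i => (f (j₀ + i)).1
  have hcycle : u '' Set.Iio r = Set.range fun j => (f j).1 := by
    refine subset_antisymm (fun _ ⟨i, _, hi⟩ => ⟨_, hi⟩) ?_
    rintro _ ⟨j, rfl⟩
    refine ⟨(j - j₀).val, ZMod.val_lt _, ?_⟩
    simp only [u, ZMod.natCast_val, ZMod.cast_id', id, add_sub_cancel]
  have hwalk := S.iterate_step_regressOn (ν := κ) (u := u) (s := r)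
    (fun i _ => ⟨(f (j₀ + i)).2, by simp only [h.1, u, Nat.cast_succ, add_assoc]⟩)
    (fun i j hij hjr hu => by
      have := add_left_cancel (hinj (Subtype.ext hu))
      rw [ZMod.natCast_eq_natCast_iff', Nat.mod_eq_of_lt (by omega),
        Nat.mod_eq_of_lt hjr] at this
      omega)
  rwa [hcycle, ← h.eq_regressOn, show u 0 = (f j₀).1 by simp [u],
    show u r = (f j₀).1 by simp [u]] at hwalk

lemma step (h : S.IsCyclePushAlong f κ κ') {v : S.V0} (hv : v ∉ Set.range f) :
    (S.step (v.1, κ)).1 = (S.step (v.1, κ')).1 ∧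
      S.IsCyclePushAlong f (S.step (v.1, κ)).2 (S.step (v.1, κ')).2 := by
  have hκv := h.2.2 v hv
  have hne : ∀ j, f j ≠ v := fun j hj => hv ⟨j, hj⟩
  refine ⟨by rw [step_fst, step_fst, hκv], ?_, ?_, ?_⟩
  · intro j
    rw [step_snd, Function.update_of_ne (hne j), h.1]
  · intro j
    rw [step_snd, step_snd, Function.update_of_ne (hne j), Function.update_of_ne (hne j), h.2.1]
  · intro w hw
    rw [step_snd, step_snd, hκv]
    by_cases hwv : w = v
    · subst hwv
      rw [Function.update_self, Function.update_self]
    · rw [Function.update_of_ne hwv, Function.update_of_ne hwv, h.2.2 w hw]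

theorem route_fst_eq_and_pushEquiv (hr : 0 < r) (hinj : Function.Injective f)
    (h : S.IsCyclePushAlong f κ κ') (x : V) :
    (S.route x κ).1 = (S.route x κ').1 ∧ S.PushEquiv (S.route x κ).2 (S.route x κ').2 := by
  obtain ⟨n, hn⟩ := S.exists_iterate_step_mem (x, κ)
  induction n generalizing x κ κ' with
  | zero =>
    rw [S.route_of_mem (x := x) hn, S.route_of_mem (x := x) hn]
    exact ⟨rfl, Relation.EqvGen.rel _ _ ⟨r, hr, f, hinj, h⟩⟩
  | succ n ih =>
    by_cases hxT : x ∈ S.T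
    · exact ih h x (by rwa [iterate_step_of_mem hxT])
    by_cases hv : (⟨x, hxT⟩ : S.V0) ∈ Set.range f
    · obtain ⟨j, hj⟩ := hv
      rw [← S.route_iterate_step x κ' r, show x = (f j).1 by rw [hj],
        h.iterate_step_cycle hr hinj j]
      exact ⟨rfl, Relation.EqvGen.refl _⟩
    · obtain ⟨hpos, hstep⟩ : (S.step (x, κ)).1 = (S.step (x, κ')).1 ∧ _ := h.step hv
      rw [← S.route_iterate_step x κ 1, ← S.route_iterate_step x κ' 1]
      simp only [Function.iterate_one]
      rw [← hpos]
      exact ih hstep _ (by rwa [← Function.iterate_succ_apply])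

end IsCyclePushAlong

variable {S} in
theorem route_fst_eq_and_pushEquiv {κ κ' : S.RConf} (h : S.PushEquiv κ κ') (x : V) :
    (S.route x κ).1 = (S.route x κ').1 ∧ S.PushEquiv (S.route x κ).2 (S.route x κ').2 := by
  induction h with
  | rel _ _ hpush =>
    obtain ⟨r, hr, f, hinj, hf⟩ := hpush
    exact IsCyclePushAlong.route_fst_eq_and_pushEquiv hr hinj hf x
  | refl => exact ⟨rfl, Relation.EqvGen.refl _⟩
  | symm _ _ _ ih => exact ⟨ih.1.symm, ih.2.symm⟩
  | trans _ _ _ _ _ ih₁ ih₂ => exact ⟨ih₁.1.trans ih₂.1, ih₁.2.trans _ _ _ ih₂.2⟩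

def rotorSucc (ξ : S.RConf) (a : V) : V :=
  if h : a ∈ S.T then a else S.head (ξ.1 ⟨a, h⟩)

section RotorSucc

variable {S} {ξ : S.RConf}

lemma rotorSucc_of_mem {a : V} (ha : a ∈ S.T) : S.rotorSucc ξ a = a := dif_pos ha

lemma rotorRel_rotorSucc {a : V} (ha : a ∉ S.T) : S.rotorRel ξ a (S.rotorSucc ξ a) :=
  ⟨ha, by rw [rotorSucc, dif_neg ha]⟩

lemma rotorSucc_eq_of_rotorRel {a b : V} (h : S.rotorRel ξ a b) : S.rotorSucc ξ a = b := by
  obtain ⟨ha, rfl⟩ := h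
  exact dif_neg ha

lemma transGen_rotorRel_iterate {a : V} {n : ℕ} (hn : 0 < n)
    (hT : ∀ k < n, (S.rotorSucc ξ)^[k] a ∉ S.T) :
    Relation.TransGen (S.rotorRel ξ) a ((S.rotorSucc ξ)^[n] a) := by
  induction n with
  | zero => omega
  | succ n ih =>
    rw [Function.iterate_succ_apply']
    rcases Nat.eq_zero_or_pos n with rfl | hn
    · exact .single (rotorRel_rotorSucc (hT 0 hn))
    · exact .tail (ih hn fun k hk => hT k (by omega)) (rotorRel_rotorSucc (hT n (by omega)))

lemma exists_iterate_rotorSucc_of_transGen {a b : V}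
    (h : Relation.TransGen (S.rotorRel ξ) a b) : ∃ n, 0 < n ∧ (S.rotorSucc ξ)^[n] a = b := by
  induction h with
  | single hab => exact ⟨1, one_pos, rotorSucc_eq_of_rotorRel hab⟩
  | tail _ hbc ih =>
    obtain ⟨n, hn, rfl⟩ := ih
    exact ⟨n + 1, by omega, by rw [Function.iterate_succ_apply', rotorSucc_eq_of_rotorRel hbc]⟩

lemma iterate_rotorSucc_ne_of_acyclic (hξ : S.IsAcyclicConf ξ) {a : V} {n i j : ℕ}
    (hT : ∀ k < n, (S.rotorSucc ξ)^[k] a ∉ S.T) (hij : i < j) (hjn : j ≤ n) :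
    (S.rotorSucc ξ)^[i] a ≠ (S.rotorSucc ξ)^[j] a := by
  intro heq
  apply hξ ((S.rotorSucc ξ)^[i] a)
  have hshift : ∀ k, (S.rotorSucc ξ)^[k] ((S.rotorSucc ξ)^[i] a) = (S.rotorSucc ξ)^[k + i] a :=
    fun k => (Function.iterate_add_apply _ k i a).symm
  have := transGen_rotorRel_iterate (ξ := ξ) (a := (S.rotorSucc ξ)^[i] a) (n := j - i)
    (by omega) fun k hk => by rw [hshift]; exact hT _ (by omega)
  rwa [hshift, Nat.sub_add_cancel hij.le, ← heq] at this

lemma exists_iterate_rotorSucc_mem_of_acyclic (hξ : S.IsAcyclicConf ξ) (a : V) :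
    ∃ n, (S.rotorSucc ξ)^[n] a ∈ S.T := by
  by_contra! hT
  obtain ⟨i, j, hne, heq⟩ := Finite.exists_ne_map_eq_of_infinite fun n => (S.rotorSucc ξ)^[n] a
  rcases Nat.lt_or_gt_of_ne hne with hij | hji
  · exact iterate_rotorSucc_ne_of_acyclic hξ (fun k _ => hT k) hij le_rfl heq
  · exact iterate_rotorSucc_ne_of_acyclic hξ (fun k _ => hT k) hji le_rfl heq.symm

end RotorSucc

theorem exists_addAt_eq_of_acyclic {ξ : S.RConf} (hξ : S.IsAcyclicConf ξ) (w : S.V0) :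
    ∃ ρ, S.addAt w ρ = ξ := by
  classical
  set u : ℕ → V := fun i => (S.rotorSucc ξ)^[i] w.1
  have hK := S.exists_iterate_rotorSucc_mem_of_acyclic hξ w.1
  have hT : ∀ k < Nat.find hK, u k ∉ S.T := fun k hk => Nat.find_min hK hk
  have hwalk : S.step^[Nat.find hK] (w.1, S.regressOn ξ (u '' Set.Iio (Nat.find hK))) =
      (u (Nat.find hK), ξ) := S.iterate_step_regressOn
    (fun i hi => by
      simpa only [u, Function.iterate_succ_apply'] using rotorRel_rotorSucc (hT i hi))
    (fun i j hij hjK => iterate_rotorSucc_ne_of_acyclic hξ hT hij hjK.le)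
  refine ⟨S.regressOn ξ (u '' Set.Iio (Nat.find hK)), ?_⟩
  rw [addAt, ← S.route_iterate_step _ _ (Nat.find hK), hwalk,
    S.route_of_mem (Nat.find_spec hK)]

lemma exists_cycle_of_not_acyclic {ρ : S.RConf} (hρ : ¬ S.IsAcyclicConf ρ) :
    ∃ r, 0 < r ∧ ∃ f : ZMod r → S.V0, Function.Injective f ∧
      ∀ j, S.head (ρ.1 (f j)) = (f (j + 1)).1 := by
  simp only [IsAcyclicConf, not_forall, not_not] at hρ
  obtain ⟨v, hv⟩ := hρ
  obtain ⟨n, hn, hper⟩ := exists_iterate_rotorSucc_of_transGen hv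
  have hvT : v ∉ S.T := by
    obtain ⟨c, hc, -⟩ := Relation.TransGen.head'_iff.mp hv
    exact hc.1
  have horbit : ∀ k, (S.rotorSucc ρ)^[k] v ∉ S.T := by
    intro k hk
    have hfix := Function.iterate_fixed (rotorSucc_of_mem (ξ := ρ) hk) (n * (k + 1) - k)
    rw [← Function.iterate_add_apply, Nat.sub_add_cancel (by nlinarith),
      (Function.IsPeriodicPt.mul_const hper (k + 1)).eq] at hfix
    exact hvT (hfix ▸ hk)
  set r := Function.minimalPeriod (S.rotorSucc ρ) v
  have hr : 0 < r := Function.IsPeriodicPt.minimalPeriod_pos hn hper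
  have : NeZero r := ⟨hr.ne'⟩
  refine ⟨r, hr, fun j => ⟨(S.rotorSucc ρ)^[j.val] v, horbit _⟩, fun i j hij => ?_, fun j => ?_⟩
  · exact ZMod.val_injective _ (Function.iterate_injOn_Iio_minimalPeriod (ZMod.val_lt i)
      (ZMod.val_lt j) (congrArg Subtype.val hij))
  · have hsucc : (j + 1 : ZMod r) = ((j.val + 1 : ℕ) : ZMod r) := by
      push_cast [ZMod.natCast_zmod_val]; rfl
    show S.head (ρ.1 ⟨(S.rotorSucc ρ)^[j.val] v, _⟩) = (S.rotorSucc ρ)^[(j + 1).val] v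
    rw [hsucc, ZMod.val_natCast, Function.iterate_mod_minimalPeriod_eq,
      Function.iterate_succ_apply', rotorSucc, dif_neg (horbit _)]

def ReachesTIn : ℕ → V → Prop
  | 0, u => u ∈ S.T
  | n + 1, u => ∃ e, S.src e = u ∧ ReachesTIn n (S.head e)

lemma exists_reachesTIn (u : V) : ∃ n, S.ReachesTIn n u := by
  obtain ⟨t, ht⟩ := S.T_nonempty
  induction S.strongly_connected u t using Relation.ReflTransGen.head_induction_on with
  | refl => exact ⟨0, ht⟩
  | head hab _ ih =>
    obtain ⟨n, hn⟩ := ih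
    obtain ⟨e, rfl, rfl⟩ := hab
    exact ⟨n + 1, e, rfl, hn⟩

open Classical in
noncomputable def distT (u : V) : ℕ := Nat.find (S.exists_reachesTIn u)

open Classical in
lemma reachesTIn_distT (u : V) : S.ReachesTIn (S.distT u) u :=
  Nat.find_spec (S.exists_reachesTIn u)

open Classical in
lemma distT_le {u : V} {n : ℕ} (h : S.ReachesTIn n u) : S.distT u ≤ n := Nat.find_le h

lemma exists_arc_distT_lt (v : S.V0) :
    ∃ e, S.src e = v.1 ∧ S.distT (S.head e) < S.distT v.1 := by
  have hreach := S.reachesTIn_distT v.1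
  obtain ⟨n, hn⟩ : ∃ n, S.distT v.1 = n + 1 :=
    Nat.exists_eq_succ_of_ne_zero fun h0 => v.2 (by rw [h0] at hreach; exact hreach)
  rw [hn] at hreach
  obtain ⟨e, he, hreach⟩ := hreach
  exact ⟨e, he, hn ▸ Nat.lt_succ_of_le (S.distT_le hreach)⟩

noncomputable def baseArc (v : S.V0) : E := (S.exists_arc_distT_lt v).choose

lemma src_baseArc (v : S.V0) : S.src (S.baseArc v) = v.1 :=
  (S.exists_arc_distT_lt v).choose_spec.1

lemma distT_head_baseArc (v : S.V0) : S.distT (S.head (S.baseArc v)) < S.distT v.1 :=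
  (S.exists_arc_distT_lt v).choose_spec.2

open Classical in
noncomputable def rotorIndex (ρ : S.RConf) (v : S.V0) : ℕ :=
  Nat.find (S.next_cyclic (S.baseArc v) (ρ.1 v) (by rw [S.src_baseArc, ρ.2]))

open Classical in
lemma next_iterate_rotorIndex (ρ : S.RConf) (v : S.V0) :
    S.next^[S.rotorIndex ρ v] (S.baseArc v) = ρ.1 v :=
  Nat.find_spec (S.next_cyclic (S.baseArc v) (ρ.1 v) (by rw [S.src_baseArc, ρ.2]))

open Classical in
lemma rotorIndex_le {ρ : S.RConf} {v : S.V0} {k : ℕ}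
    (h : S.next^[k] (S.baseArc v) = ρ.1 v) : S.rotorIndex ρ v ≤ k :=
  Nat.find_le h

lemma rotorIndex_congr {ρ ρ' : S.RConf} {v : S.V0} (h : ρ.1 v = ρ'.1 v) :
    S.rotorIndex ρ v = S.rotorIndex ρ' v := by
  simp only [rotorIndex, h]

lemma rotorIndex_lt_of_next_eq {ρ ρ' : S.RConf} {v : S.V0} (hnext : S.next (ρ'.1 v) = ρ.1 v)
    (hbase : ρ.1 v ≠ S.baseArc v) : S.rotorIndex ρ' v < S.rotorIndex ρ v := by
  have hspec := S.next_iterate_rotorIndex ρ v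
  obtain ⟨k, hk⟩ : ∃ k, S.rotorIndex ρ v = k + 1 :=
    Nat.exists_eq_succ_of_ne_zero fun h0 => hbase (by rw [← hspec, h0]; rfl)
  rw [hk, Function.iterate_succ_apply', ← hnext] at hspec
  exact hk ▸ Nat.lt_succ_of_le (S.rotorIndex_le (S.next_bijective.injective hspec))

noncomputable def maxDistT : ℕ := Finset.univ.sup S.distT

/-- In the lexicographic order the levels closest to `T` are the most significant. -/
noncomputable def potential (ρ : S.RConf) : Lex (Fin (S.maxDistT + 1) → ℕ) :=
  toLex fun d => ∑ v ∈ Finset.univ.filter (fun v : S.V0 => S.distT v.1 = d), S.rotorIndex ρ v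

/-- Regress a rotor cycle. On the level of its vertices closest to `T` no cycle rotor is a base
arc (it would lead closer to `T`), so every cycle rotor there moves back one step, while the
levels below do not meet the cycle. -/
lemma exists_isCyclePush_potential_lt {ρ : S.RConf} (hρ : ¬ S.IsAcyclicConf ρ) :
    ∃ ρ', S.IsCyclePush ρ ρ' ∧ S.potential ρ' < S.potential ρ := by
  obtain ⟨r, hr, f, hinj, hcycle⟩ := S.exists_cycle_of_not_acyclic hρ
  have : NeZero r := ⟨hr.ne'⟩
  set P : Set V := Set.range fun j => (f j).1
  have hoff : ∀ v, v ∉ Set.range f → (S.regressOn ρ P).1 v = ρ.1 v := fun v hv =>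
    S.regressOn_apply_of_not_mem ρ fun ⟨j, hj⟩ => hv ⟨j, Subtype.ext hj⟩
  have hon : ∀ j, S.next ((S.regressOn ρ P).1 (f j)) = ρ.1 (f j) := fun j => by
    rw [S.regressOn_apply_of_mem ρ (Set.mem_range_self (f := fun j => (f j).1) j), next_prevArc]
  refine ⟨S.regressOn ρ P, ⟨r, hr, f, hinj, hcycle, hon, hoff⟩, ?_⟩
  obtain ⟨j₀, -, hj₀⟩ := Finset.univ.exists_min_image (fun j => S.distT (f j).1)
    Finset.univ_nonempty
  have hmin : ∀ j, S.distT (f j₀).1 ≤ S.distT (f j).1 := fun j => hj₀ j (Finset.mem_univ j)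
  have hlt : ∀ j, S.distT (f j).1 = S.distT (f j₀).1 →
      S.rotorIndex (S.regressOn ρ P) (f j) < S.rotorIndex ρ (f j) := by
    intro j hj
    refine S.rotorIndex_lt_of_next_eq (hon j) fun hbase => ?_
    have := S.distT_head_baseArc (f j)
    rw [← hbase, hcycle, hj] at this
    exact absurd (hmin (j + 1)) (not_le.mpr this)
  have hdistT : S.distT (f j₀).1 < S.maxDistT + 1 :=
    Nat.lt_succ_of_le (Finset.le_sup (f := S.distT) (Finset.mem_univ _))
  refine ⟨⟨_, hdistT⟩, fun d hd => Finset.sum_congr rfl fun v hv => ?_, ?_⟩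
  · refine S.rotorIndex_congr (hoff v ?_)
    rintro ⟨j, rfl⟩
    have : S.distT (f j).1 < S.distT (f j₀).1 := (Finset.mem_filter.mp hv).2 ▸ hd
    exact absurd (hmin j) (not_le.mpr this)
  · refine Finset.sum_lt_sum (fun v hv => ?_) ⟨f j₀, by simp, hlt j₀ rfl⟩
    by_cases hvf : v ∈ Set.range f
    · obtain ⟨j, rfl⟩ := hvf
      exact (hlt j (Finset.mem_filter.mp hv).2).le
    · exact (S.rotorIndex_congr (hoff v hvf)).le

theorem exists_pushEquiv_acyclic (ρ : S.RConf) :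
    ∃ ξ, S.PushEquiv ρ ξ ∧ S.IsAcyclicConf ξ := by
  induction ρ using (InvImage.wf S.potential wellFounded_lt).induction with
  | _ ρ ih =>
    by_cases hρ : S.IsAcyclicConf ρ
    · exact ⟨ρ, Relation.EqvGen.refl ρ, hρ⟩
    obtain ⟨ρ', hpush, hlt⟩ := S.exists_isCyclePush_potential_lt hρ
    obtain ⟨ξ, hξ, hacyc⟩ := ih ρ' hlt
    exact ⟨ξ, (Relation.EqvGen.rel _ _ hpush).trans _ _ _ hξ, hacyc⟩

lemma pushEquiv_of_pushEquiv_addAt (w : S.V0) {a b : S.RConf}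
    (h : S.PushEquiv (S.addAt w a) (S.addAt w b)) : S.PushEquiv a b := by
  let addAtQ : Quotient (Relation.EqvGen.setoid S.IsCyclePush) →
      Quotient (Relation.EqvGen.setoid S.IsCyclePush) :=
    Quotient.map (S.addAt w) fun _ _ h => (route_fst_eq_and_pushEquiv h w.1).2
  have hsurj : Function.Surjective addAtQ := by
    rintro ⟨ρ⟩
    obtain ⟨ξ, hρξ, hξ⟩ := S.exists_pushEquiv_acyclic ρ
    obtain ⟨ρ₀, rfl⟩ := S.exists_addAt_eq_of_acyclic hξ w
    exact ⟨⟦ρ₀⟧, Quotient.sound hρξ.symm⟩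
  exact Quotient.exact (Finite.injective_iff_surjective.mpr hsurj (Quotient.sound h))

lemma pushEquiv_of_pushEquiv_iterate_addAt (w : S.V0) (n : ℕ) {a b : S.RConf}
    (h : S.PushEquiv ((S.addAt w)^[n] a) ((S.addAt w)^[n] b)) : S.PushEquiv a b := by
  induction n generalizing a b with
  | zero => exact h
  | succ n ih => exact S.pushEquiv_of_pushEquiv_addAt w (ih h)

lemma pushEquiv_of_pushEquiv_act (σ : S.PConf) {a b : S.RConf}
    (h : S.PushEquiv (S.act σ a) (S.act σ b)) : S.PushEquiv a b := by
  unfold act at h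
  generalize (Finset.univ : Finset S.V0).toList = L at h
  induction L with
  | nil => exact h
  | cons v L ih => exact ih (S.pushEquiv_of_pushEquiv_iterate_addAt v (σ v) h)

end RotorSystem

/-- **Lemma (equivalent configurations route to the same target).**
If `ρ₁ ≡ ρ₂`, then a single particle started at any non-target vertex `v` reaches the
same target vertex from `ρ₁` as from `ρ₂`: `t_v(ρ₁) = t_v(ρ₂)`. -/
theorem requiv_same_target {V E : Type} [Fintype V] [DecidableEq V] [Fintype E]
    [DecidableEq E] (S : RotorSystem V E)
    (ρ₁ ρ₂ : S.RConf) (h : S.REquiv ρ₁ ρ₂) (v : S.V0) :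
    S.tgt v.1 ρ₁ = S.tgt v.1 ρ₂ := by
  obtain ⟨σ, hσ⟩ := h
  have hpush : S.PushEquiv ρ₁ ρ₂ :=
    S.pushEquiv_of_pushEquiv_act σ (hσ ▸ Relation.EqvGen.refl _)
  exact (RotorSystem.route_fst_eq_and_pushEquiv hpush v.1).1
end

section
/- If ρ and ρ' are equivalent stack configurations on G (ρ ≡ ρ', with equivalence taken with respect to the given periodic stacks), then their flips are equivalent with respect to the flipped stacks: Φ(ρ) ≡ Φ(ρ'). -/
open Function

section BiStackSetup

variable {V E : Type} [Fintype V] [DecidableEq V] [Fintype E]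

/-- The directed multigraph with arc set `E`, source map `src` and head map `head`
is strongly connected. -/
def StronglyConnected (src head : E → V) : Prop :=
  ∀ v w : V, Relation.ReflTransGen (fun a b => ∃ e : E, src e = a ∧ head e = b) v w

/-- The outdegree of a vertex `v`. -/
def outdeg (src : E → V) (v : V) : ℕ :=
  (Finset.univ.filter fun e : E => src e = v).card

/-- `g : ℤ → E` is a bi-infinite rotor stack at `v`: every entry is an arc emanating
from `v`, the sequence is periodic with period `d`, and each fundamental period lists
every arc emanating from `v` exactly once.  Index `0` is the retrospective state (the
rotor) and indices `≥ 1` are the future instructions. -/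
def IsBiRotorStack (src : E → V) (d : ℕ) (v : V) (g : ℤ → E) : Prop :=
  (∀ i : ℤ, src (g i) = v) ∧ (∀ i : ℤ, g (i + (d : ℤ)) = g i) ∧
    (∀ e : E, src e = v → ∃ i : ℤ, 1 ≤ i ∧ i ≤ (d : ℤ) ∧ g i = e) ∧
    (∀ i j : ℤ, 1 ≤ i → i ≤ (d : ℤ) → 1 ≤ j → j ≤ (d : ℤ) → g i = g j → i = j)

end BiStackSetup

/-- A stack configuration: each non-target vertex carries a pointed bi-infinite stack
of arcs; index `0` is the retrospective state and indices `≥ 1` the future. -/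
abbrev SConf (E : Type) {V : Type} (T : Finset V) : Type := {v : V // v ∉ T} → ℤ → E

section StackOps

variable {V E : Type} [Fintype V] [DecidableEq V] [Fintype E]

/-- Flip every stack, exchanging past and future:
`[…, e₋₁, e₀ | e₁, e₂, …]` becomes `[…, e₂, e₁ | e₀, e₋₁, …]`. -/
def flipC {T : Finset V} (β : SConf E T) : SConf E T := fun v i => β v (1 - i)

/-- One step of a particle: at a non-target vertex, shift the pointer one place to
the right and move the particle along the newly passed arc (the new retrospective
state); target vertices absorb. -/
def stepP (head : E → V) (T : Finset V) (p : V × SConf E T) : V × SConf E T :=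
  if h : p.1 ∈ T then p
  else (head (p.2 ⟨p.1, h⟩ 1),
    Function.update p.2 ⟨p.1, h⟩ fun i => p.2 ⟨p.1, h⟩ (i + 1))

/-- One step of an antiparticle: at a non-target vertex, move the antiparticle along
the retrospective arc and then shift the pointer one place to the left; target
vertices absorb. -/
def stepM (head : E → V) (T : Finset V) (p : V × SConf E T) : V × SConf E T :=
  if h : p.1 ∈ T then p
  else (head (p.2 ⟨p.1, h⟩ 0),
    Function.update p.2 ⟨p.1, h⟩ fun i => p.2 ⟨p.1, h⟩ (i - 1))

open Classical in
/-- Route a particle from `x` until it first reaches the target set. -/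
noncomputable def routeP (head : E → V) (T : Finset V) (x : V) (β : SConf E T) :
    V × SConf E T :=
  if h : ∃ n, ((stepP head T)^[n] (x, β)).1 ∈ T then
    (stepP head T)^[Nat.find h] (x, β)
  else (x, β)

open Classical in
/-- Route an antiparticle from `x` until it first reaches the target set. -/
noncomputable def routeM (head : E → V) (T : Finset V) (x : V) (β : SConf E T) :
    V × SConf E T :=
  if h : ∃ n, ((stepM head T)^[n] (x, β)).1 ∈ T then
    (stepM head T)^[Nat.find h] (x, β)
  else (x, β)

/-- The particle addition operator `E_v⁺`. -/
noncomputable def EP (head : E → V) (T : Finset V) (v : {v : V // v ∉ T})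
    (β : SConf E T) : SConf E T := (routeP head T v.1 β).2

/-- The antiparticle addition operator `E_v⁻`. -/
noncomputable def EM (head : E → V) (T : Finset V) (v : {v : V // v ∉ T})
    (β : SConf E T) : SConf E T := (routeM head T v.1 β).2

/-- `t_v⁺(β)`: the target hit by a particle started at `v`. -/
noncomputable def tP (head : E → V) (T : Finset V) (v : {v : V // v ∉ T})
    (β : SConf E T) : V := (routeP head T v.1 β).1

/-- `t_v⁻(β)`: the target hit by an antiparticle started at `v`. -/
noncomputable def tM (head : E → V) (T : Finset V) (v : {v : V // v ∉ T})
    (β : SConf E T) : V := (routeM head T v.1 β).1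

/-- The action `σβ`: place `σ v` particles at each non-target vertex `v` and route
them all to the target set. -/
noncomputable def actS (head : E → V) (T : Finset V) (σ : {v : V // v ∉ T} → ℕ)
    (β : SConf E T) : SConf E T :=
  (Finset.univ : Finset {v : V // v ∉ T}).toList.foldr
    (fun v r => (EP head T v)^[σ v] r) β

/-- Equivalence of stack configurations: `β ≡ β'` iff `σβ = σβ'` for some particle
configuration `σ`. -/
def SEquiv (head : E → V) (T : Finset V) (β β' : SConf E T) : Prop :=
  ∃ σ : {v : V // v ∉ T} → ℕ, actS head T σ β = actS head T σ β'

/-- `A` is (the vertex set of) a cycle of the rotor configuration of `β`: it is the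
range of an injective cyclic enumeration `v_0, …, v_{r-1}` such that the
retrospective arc at `v_j` leads to `v_{j+1}` (cyclically). -/
def IsCycleSet (head : E → V) (T : Finset V) (β : SConf E T)
    (A : Set {v : V // v ∉ T}) : Prop :=
  ∃ r : ℕ, 0 < r ∧ ∃ f : ZMod r → {v : V // v ∉ T}, Function.Injective f ∧
    Set.range f = A ∧ ∀ j : ZMod r, head (β (f j) 0) = (f (j + 1)).1

open Classical in
/-- Push the cycle with vertex set `A`: shift the pointer one place to the left at
each vertex of `A`, leaving the other stacks unchanged. -/
noncomputable def pushCycle {T : Finset V} (β : SConf E T)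
    (A : Set {v : V // v ∉ T}) : SConf E T :=
  fun v => if v ∈ A then (fun i => β v (i - 1)) else β v

end StackOps

/-!
Routing `σ` particles from `β` advances every stack by the odometer `u`, the least nonnegative
`h` with `σ + arrivals β h ≤ h` (least action principle); the walks terminate because each
arc occurs again and again on the periodic stacks and `G` is strongly connected. So `σβ = σβ'`
forces `β' = shiftC w β` with `w = u - u'` and `arrivals β w = w`. Conversely such a `w` makes
`β` and `shiftC w β` equivalent (with `σ = |w|`), since `u - w` is then the odometer of
`shiftC w β`. Flipping sends `shiftC w β` to `shiftC (-w) (flipC β)` and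
`arrivals (flipC β) (-w)` to `-arrivals β w`, so `-w` satisfies the same condition for `flipC β`.
-/

open Finset

section SignedCount

variable (P : ℤ → Prop) [DecidablePred P]

noncomputable def signedCount (q : ℤ) : ℤ :=
  (#{j ∈ Ioc 0 q | P j} : ℤ) - #{j ∈ Ioc q 0 | P j}

@[simp]
lemma signedCount_zero : signedCount P 0 = 0 := by
  simp [signedCount]

lemma signedCount_add_one (q : ℤ) :
    signedCount P (q + 1) = signedCount P q + if P (q + 1) then 1 else 0 := by
  rcases le_or_gt 0 q with hq | hq
  · rw [signedCount, signedCount, ← insert_Ioc_right_eq_Ioc_add_one hq, filter_insert,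
      Ioc_eq_empty_of_le (by omega : (0 : ℤ) ≤ q + 1), Ioc_eq_empty_of_le hq]
    split_ifs <;> simp
  · rw [signedCount, signedCount, ← insert_Ioc_add_one_left_eq_Ioc hq, filter_insert,
      Ioc_eq_empty_of_le (by omega : q + 1 ≤ 0), Ioc_eq_empty_of_le hq.le]
    split_ifs <;> simp

lemma eq_signedCount {G : ℤ → ℤ} (h0 : G 0 = 0)
    (hG : ∀ q, G (q + 1) = G q + if P (q + 1) then 1 else 0) : G = signedCount P := by
  funext q
  induction q using Int.induction_on with
  | zero => rw [h0, signedCount_zero]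
  | succ q ih => rw [hG, signedCount_add_one, ih]
  | pred q ih =>
    have hG' := hG (-q - 1)
    have hsc := signedCount_add_one P (-q - 1)
    rw [sub_add_cancel] at hG' hsc
    linarith

lemma monotone_signedCount : Monotone (signedCount P) :=
  monotone_int_of_le_succ fun q => by rw [signedCount_add_one]; split_ifs <;> simp

lemma signedCount_nonneg {q : ℤ} (hq : 0 ≤ q) : 0 ≤ signedCount P q :=
  signedCount_zero P ▸ monotone_signedCount P hq

lemma signedCount_comp_add_right (t q : ℤ) :
    signedCount (fun j => P (j + t)) q = signedCount P (q + t) - signedCount P t := by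
  refine congrFun (eq_signedCount _ (G := fun q => signedCount P (q + t) - signedCount P t)
    (by simp) fun q => ?_).symm q
  rw [add_right_comm, signedCount_add_one]
  ring

lemma signedCount_comp_one_sub (q : ℤ) :
    signedCount (fun j => P (1 - j)) q = -signedCount P (-q) := by
  refine congrFun (eq_signedCount _ (G := fun q => -signedCount P (-q)) (by simp)
    fun q => ?_).symm q
  have h := signedCount_add_one P (-(q + 1))
  rw [show -(q + 1) + 1 = -q by ring, show 1 - (q + 1) = -q by ring] at *
  linarith

lemma exists_le_signedCount (hP : ∀ n, ∃ i, n ≤ i ∧ P i) (k : ℕ) :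
    ∃ q, (k : ℤ) ≤ signedCount P q := by
  induction k with
  | zero => exact ⟨0, by simp⟩
  | succ k ih =>
    obtain ⟨q, hq⟩ := ih
    obtain ⟨i, hqi, hi⟩ := hP (q + 1)
    refine ⟨i, ?_⟩
    have hmono := monotone_signedCount P (show q ≤ i - 1 by omega)
    have hstep := signedCount_add_one P (i - 1)
    rw [sub_add_cancel, if_pos hi] at hstep
    push_cast
    linarith

end SignedCount

section Shift

variable {V E : Type} {T : Finset V}

def shiftC (a : {v : V // v ∉ T} → ℤ) (γ : SConf E T) : SConf E T :=
  fun v i => γ v (i + a v)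

@[simp]
lemma shiftC_zero (γ : SConf E T) : shiftC 0 γ = γ := by
  funext v i; simp [shiftC]

lemma shiftC_shiftC (a b : {v : V // v ∉ T} → ℤ) (γ : SConf E T) :
    shiftC a (shiftC b γ) = shiftC (a + b) γ := by
  funext v i; simp [shiftC, add_assoc]

lemma flipC_shiftC (w : {v : V // v ∉ T} → ℤ) (γ : SConf E T) :
    flipC (shiftC w γ) = shiftC (-w) (flipC γ) := by
  funext v i; simp only [flipC, shiftC, Pi.neg_apply]; ring_nf

end Shift

section Arrivals

variable {V E : Type} [Fintype V] [DecidableEq V] {T : Finset V} (head : E → V)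

/-- The (signed) number of arcs with head `w` passed when the pointer of each stack `y`
advances `b y` places. -/
noncomputable def arrivals (γ : SConf E T) (b : {v : V // v ∉ T} → ℤ) (w : V) : ℤ :=
  ∑ y, signedCount (fun j => head (γ y j) = w) (b y)

variable (γ : SConf E T) (w : V)

@[simp]
lemma arrivals_zero : arrivals head γ 0 w = 0 := by
  simp [arrivals]

lemma arrivals_mono {b b' : {v : V // v ∉ T} → ℤ} (h : b ≤ b') :
    arrivals head γ b w ≤ arrivals head γ b' w :=
  sum_le_sum fun y _ => monotone_signedCount _ (h y)

lemma arrivals_nonneg {b : {v : V // v ∉ T} → ℤ} (hb : 0 ≤ b) :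
    0 ≤ arrivals head γ b w :=
  arrivals_zero head γ w ▸ arrivals_mono head γ w hb

lemma signedCount_le_arrivals {b : {v : V // v ∉ T} → ℤ} (hb : 0 ≤ b)
    (y : {v : V // v ∉ T}) :
    signedCount (fun j => head (γ y j) = w) (b y) ≤ arrivals head γ b w :=
  single_le_sum (fun y _ => signedCount_nonneg _ (hb y)) (mem_univ y)

lemma arrivals_add_single (b : {v : V // v ∉ T} → ℤ) (y : {v : V // v ∉ T}) :
    arrivals head γ (b + Pi.single y 1) w
      = arrivals head γ b w + if head (γ y (b y + 1)) = w then 1 else 0 := by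
  have hterm : ∀ y', signedCount (fun j => head (γ y' j) = w)
        (b y' + (Pi.single y 1 : {v : V // v ∉ T} → ℤ) y')
      = signedCount (fun j => head (γ y' j) = w) (b y')
        + if y' = y then (if head (γ y (b y + 1)) = w then 1 else 0) else 0 := by
    intro y'
    rcases eq_or_ne y' y with rfl | hy
    · simp [signedCount_add_one]
    · simp [hy]
  simp only [arrivals, Pi.add_apply, hterm, sum_add_distrib, sum_ite_eq', mem_univ, if_true]

lemma arrivals_shiftC (t b : {v : V // v ∉ T} → ℤ) :
    arrivals head (shiftC t γ) b w = arrivals head γ (b + t) w - arrivals head γ t w := by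
  simp only [arrivals, ← sum_sub_distrib]
  exact sum_congr rfl fun y _ =>
    signedCount_comp_add_right (fun j => head (γ y j) = w) (t y) (b y)

lemma arrivals_flipC (b : {v : V // v ∉ T} → ℤ) :
    arrivals head (flipC γ) b w = -arrivals head γ (-b) w := by
  simp only [arrivals, ← sum_neg_distrib]
  exact sum_congr rfl fun y _ => signedCount_comp_one_sub (fun j => head (γ y j) = w) (b y)

/-- By the least action principle the odometer of routing `s` particles is the least element
(`exists_isLeast_actS`). -/
def supersolutions (s : {v : V // v ∉ T} → ℕ) : Set ({v : V // v ∉ T} → ℤ) :=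
  {h | 0 ≤ h ∧ ∀ v, s v + arrivals head γ h v ≤ h v}

lemma isLeast_supersolutions_zero : IsLeast (supersolutions head γ 0) 0 :=
  ⟨⟨le_rfl, fun v => by simp⟩, fun _ hh => hh.1⟩

/-- Knaster–Tarski: `s + arrivals u` is again a supersolution. -/
lemma IsLeast.eq_add_arrivals {s : {v : V // v ∉ T} → ℕ} {u : {v : V // v ∉ T} → ℤ}
    (hu : IsLeast (supersolutions head γ s) u) (v : {v : V // v ∉ T}) :
    u v = s v + arrivals head γ u v := by
  set F : {v : V // v ∉ T} → ℤ := fun v => s v + arrivals head γ u v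
  have hFu : F ≤ u := hu.1.2
  have hF : F ∈ supersolutions head γ s :=
    ⟨fun v => add_nonneg (Nat.cast_nonneg _) (arrivals_nonneg head γ v hu.1.1),
      fun v => add_le_add_right (arrivals_mono head γ v hFu) _⟩
  exact le_antisymm (hu.2 hF v) (hFu v)

end Arrivals

section Walk

variable {V E : Type} [DecidableEq V] {T : Finset V} (head : E → V) (γ : SConf E T)

/-- A particle step in which the stacks `shiftC c γ` are recorded by the departure counts `c`
(see `semiconj_odometerStep_stepP`). -/
def odometerStep (q : V × ({v : V // v ∉ T} → ℤ)) : V × ({v : V // v ∉ T} → ℤ) :=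
  if h : q.1 ∈ T then q
  else (head (γ ⟨q.1, h⟩ (q.2 ⟨q.1, h⟩ + 1)), q.2 + Pi.single ⟨q.1, h⟩ 1)

lemma odometerStep_of_notMem {p : V} (hp : p ∉ T) (c : {v : V // v ∉ T} → ℤ) :
    odometerStep head γ (p, c)
      = (head (γ ⟨p, hp⟩ (c ⟨p, hp⟩ + 1)), c + Pi.single ⟨p, hp⟩ 1) :=
  dif_neg hp

lemma semiconj_odometerStep_stepP :
    Semiconj (fun q => (q.1, shiftC q.2 γ)) (odometerStep head γ) (stepP head T) := by
  rintro ⟨p, c⟩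
  by_cases hp : p ∈ T
  · simp [odometerStep, stepP, hp]
  simp only [odometerStep_of_notMem head γ hp, stepP, dif_neg hp, shiftC, add_comm (1 : ℤ)]
  congr 1
  funext v i
  rcases eq_or_ne v ⟨p, hp⟩ with rfl | hv
  · simp [shiftC]; ring_nf
  · simp [shiftC, hv]

lemma iterate_stepP_shiftC (n : ℕ) (x : V) (c : {v : V // v ∉ T} → ℤ) :
    (stepP head T)^[n] (x, shiftC c γ)
      = (((odometerStep head γ)^[n] (x, c)).1, shiftC ((odometerStep head γ)^[n] (x, c)).2 γ) :=
  ((semiconj_odometerStep_stepP head γ).iterate_right n (x, c)).symm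

end Walk

section Balanced

variable {V E : Type} [Fintype V] [DecidableEq V] {T : Finset V} (head : E → V)
  (γ : SConf E T) {s : {v : V // v ∉ T} → ℕ}

/-- Invariant of routing `s` particles one at a time, `q.1` being the particle in flight. -/
def BalancedState (s : {v : V // v ∉ T} → ℕ) (q : V × ({v : V // v ∉ T} → ℤ)) : Prop :=
  0 ≤ q.2 ∧
    (∀ v : {v : V // v ∉ T},
      q.2 v + (if q.1 = v then 1 else 0) = s v + arrivals head γ q.2 v) ∧
    ∀ h ∈ supersolutions head γ s, q.2 ≤ h

lemma BalancedState.step {q : V × ({v : V // v ∉ T} → ℤ)} (hq : BalancedState head γ s q) :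
    BalancedState head γ s (odometerStep head γ q) := by
  obtain ⟨p, c⟩ := q
  by_cases hp : p ∈ T
  · simpa [odometerStep, hp] using hq
  obtain ⟨hc, hbal, hle⟩ := hq
  dsimp only at hc hbal hle
  rw [odometerStep_of_notMem head γ hp]
  refine ⟨add_nonneg hc (Pi.single_nonneg.2 zero_le_one), fun v => ?_, fun h hh v => ?_⟩
  · dsimp only
    rw [arrivals_add_single, ← add_assoc, ← hbal v, Pi.add_apply]
    obtain rfl | hv := eq_or_ne v ⟨p, hp⟩
    · simp
    · have hpv : p ≠ v := fun h => hv (Subtype.ext h).symm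
      simp [hv, hpv]
  · obtain rfl | hv := eq_or_ne v ⟨p, hp⟩
    · have hmono := arrivals_mono head γ p (hle h hh)
      have hsup := hh.2 ⟨p, hp⟩
      have hbal' := hbal ⟨p, hp⟩
      rw [if_pos rfl] at hbal'
      simp only [Pi.add_apply, Pi.single_eq_same]
      linarith
    · simpa [hv] using hle h hh v

lemma BalancedState.iterate {q : V × ({v : V // v ∉ T} → ℤ)} (hq : BalancedState head γ s q)
    (n : ℕ) : BalancedState head γ s ((odometerStep head γ)^[n] q) :=
  Function.Iterate.rec _ hq (fun _ => BalancedState.step head γ) n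

lemma IsLeast.balancedState {c : {v : V // v ∉ T} → ℤ}
    (hc : IsLeast (supersolutions head γ s) c) (x : {v : V // v ∉ T}) :
    BalancedState head γ (s + Pi.single x 1) (x, c) := by
  refine ⟨hc.1.1, fun v => ?_, fun h hh => hc.2 ⟨hh.1, fun v => ?_⟩⟩
  · dsimp only
    rw [hc.eq_add_arrivals head γ v]
    obtain rfl | hv := eq_or_ne v x
    · simp; ring
    · have hxv : (x : V) ≠ v := fun h => hv (Subtype.ext h).symm
      simp [hv, hxv]
  · have hsup := hh.2 v
    simp only [Pi.add_apply, Nat.cast_add] at hsup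
    linarith [Nat.cast_nonneg (α := ℤ) ((Pi.single x 1 : {v : V // v ∉ T} → ℕ) v)]

lemma BalancedState.isLeast {t : V} {c : {v : V // v ∉ T} → ℤ}
    (hq : BalancedState head γ s (t, c)) (ht : t ∈ T) :
    IsLeast (supersolutions head γ s) c := by
  refine ⟨⟨hq.1, fun v => ?_⟩, hq.2.2⟩
  have hv : t ≠ v := fun h => v.2 (h ▸ ht)
  have hbal := hq.2.1 v
  dsimp only at hbal
  rw [if_neg hv] at hbal
  linarith

end Balanced

section Routing

variable {V E : Type} [Fintype V] [DecidableEq V] {T : Finset V} (head : E → V)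

def Terminates (γ : SConf E T) : Prop :=
  ∀ x : V, ∃ n, ((stepP head T)^[n] (x, γ)).1 ∈ T

variable {head} {γ : SConf E T}

lemma exists_EP_shiftC {s : {v : V // v ∉ T} → ℕ} {c : {v : V // v ∉ T} → ℤ}
    (hγ : Terminates head (shiftC c γ)) (hc : IsLeast (supersolutions head γ s) c)
    (x : {v : V // v ∉ T}) :
    ∃ c', IsLeast (supersolutions head γ (s + Pi.single x 1)) c' ∧
      EP head T x (shiftC c γ) = shiftC c' γ := by
  have hx := hγ x
  rw [EP, routeP, dif_pos hx]
  have hN := Nat.find_spec hx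
  rw [iterate_stepP_shiftC] at hN ⊢
  exact ⟨_, ((hc.balancedState head γ x).iterate head γ _).isLeast head γ hN, rfl⟩

lemma exists_iterate_EP_shiftC (hγ : ∀ c, Terminates head (shiftC c γ))
    {s : {v : V // v ∉ T} → ℕ} {c : {v : V // v ∉ T} → ℤ}
    (hc : IsLeast (supersolutions head γ s) c) (x : {v : V // v ∉ T}) (k : ℕ) :
    ∃ c', IsLeast (supersolutions head γ (s + Pi.single x k)) c' ∧
      (EP head T x)^[k] (shiftC c γ) = shiftC c' γ := by
  induction k with
  | zero => exact ⟨c, by simpa using hc, rfl⟩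
  | succ k ih =>
    obtain ⟨c', hc', he⟩ := ih
    obtain ⟨c'', hc'', he'⟩ := exists_EP_shiftC (hγ c') hc' x
    refine ⟨c'', ?_, by rw [iterate_succ_apply', he, he']⟩
    rwa [Pi.single_add, ← add_assoc]

lemma exists_foldr_EP_shiftC (hγ : ∀ c, Terminates head (shiftC c γ))
    (σ : {v : V // v ∉ T} → ℕ) (l : List {v : V // v ∉ T}) :
    ∃ c, IsLeast (supersolutions head γ fun v => l.count v * σ v) c ∧
      l.foldr (fun v r => (EP head T v)^[σ v] r) γ = shiftC c γ := by
  induction l with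
  | nil =>
    refine ⟨0, ?_, by simp⟩
    convert isLeast_supersolutions_zero head γ using 2
    simp [Pi.zero_def]
  | cons w l ih =>
    obtain ⟨c, hc, he⟩ := ih
    obtain ⟨c', hc', he'⟩ := exists_iterate_EP_shiftC hγ hc w (σ w)
    refine ⟨c', ?_, by rw [List.foldr_cons, he, he']⟩
    convert hc' using 2
    funext v
    obtain rfl | hv := eq_or_ne v w
    · simp [add_mul]
    · simp [hv, Ne.symm hv]

lemma exists_isLeast_actS (hγ : ∀ c, Terminates head (shiftC c γ))
    (σ : {v : V // v ∉ T} → ℕ) :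
    ∃ u, IsLeast (supersolutions head γ σ) u ∧ actS head T σ γ = shiftC u γ := by
  obtain ⟨u, hu, he⟩ := exists_foldr_EP_shiftC hγ σ univ.toList
  refine ⟨u, ?_, he⟩
  convert hu using 2
  funext v
  rw [List.count_eq_one_of_mem (nodup_toList _) (mem_toList.2 (mem_univ v)), one_mul]

end Routing

section Recurrence

variable {V E : Type} {T : Finset V} (src : E → V) (γ : SConf E T)

def Recurrent : Prop :=
  ∀ (v : {v : V // v ∉ T}) (e : E), src e = v → ∀ n : ℤ, ∃ i, n ≤ i ∧ γ v i = e

variable {src γ}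

lemma Recurrent.shiftC (hγ : Recurrent src γ) (a : {v : V // v ∉ T} → ℤ) :
    Recurrent src (shiftC a γ) := by
  intro v e he n
  obtain ⟨i, hi, hie⟩ := hγ v e he (n + a v)
  exact ⟨i - a v, by omega, by simp [_root_.shiftC, hie]⟩

end Recurrence

section Termination

variable {V E : Type} [Fintype V] [DecidableEq V] {T : Finset V} (head : E → V)
  (γ : SConf E T)

lemma sum_iterate_odometerStep (q : V × ({v : V // v ∉ T} → ℤ)) {n : ℕ}
    (h : ∀ m < n, ((odometerStep head γ)^[m] q).1 ∉ T) :
    ∑ v, ((odometerStep head γ)^[n] q).2 v = ∑ v, q.2 v + n := by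
  induction n with
  | zero => simp
  | succ n ih =>
    rw [iterate_succ_apply', odometerStep_of_notMem head γ (h n n.lt_succ_self)]
    simp only [Pi.add_apply, sum_add_distrib, sum_pi_single', mem_univ, if_true]
    rw [ih fun m hm => h m (by omega)]
    push_cast
    ring

def walk (x : V) (n : ℕ) : V × ({v : V // v ∉ T} → ℤ) := (odometerStep head γ)^[n] (x, 0)

variable {head γ} {x : V}

lemma arrivals_walk_eq_zero {n : ℕ} (h : ∀ m ≤ n, (walk head γ x m).1 ∉ T) {t : V}
    (ht : t ∈ T) : arrivals head γ (walk head γ x n).2 t = 0 := by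
  induction n with
  | zero => simp [walk]
  | succ n ih =>
    have hstep := h (n + 1) le_rfl
    simp only [walk] at h hstep ih ⊢
    rw [iterate_succ_apply', odometerStep_of_notMem head γ (h n (by omega))] at hstep ⊢
    rw [arrivals_add_single, ih fun m hm => h m (by omega),
      if_neg (ne_of_mem_of_not_mem ht hstep).symm]
    simp

lemma balancedState_walk (hx : x ∉ T) (n : ℕ) :
    BalancedState head γ (Pi.single ⟨x, hx⟩ 1) (walk head γ x n) := by
  have h :=
    ((isLeast_supersolutions_zero head γ).balancedState head γ ⟨x, hx⟩).iterate head γ n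
  rwa [zero_add] at h

lemma exists_unbounded_walk (hwalk : ∀ n, (walk head γ x n).1 ∉ T) :
    ∃ y : {v : V // v ∉ T}, ∀ k : ℤ, ∃ n, k ≤ (walk head γ x n).2 y := by
  by_contra! hbdd
  choose K hK using hbdd
  set N := (∑ y, K y).toNat
  have hsum := sum_iterate_odometerStep head γ (x, 0) (n := N) fun m _ => hwalk m
  simp only [Pi.zero_apply, sum_const_zero, zero_add] at hsum
  have hlt : ∑ y, (walk head γ x N).2 y < ∑ y, K y :=
    sum_lt_sum_of_nonempty ⟨⟨x, hwalk 0⟩, mem_univ _⟩ fun y _ => hK y N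
  have hN : ∑ y, K y ≤ N := Int.self_le_toNat _
  simp only [walk] at hlt
  omega

/-- Departures from `y` use every arc `e` out of `y` again and again, so `head e` is entered,
and hence left, unboundedly often; in particular it is not a target. -/
lemma Recurrent.unbounded_walk_head {src : E → V} (hγ : Recurrent src γ)
    (hwalk : ∀ n, (walk head γ x n).1 ∉ T) {y : {v : V // v ∉ T}}
    (hy : ∀ k : ℤ, ∃ n, k ≤ (walk head γ x n).2 y) {e : E} (he : src e = y) :
    ∃ hw : head e ∉ T, ∀ k : ℤ, ∃ n, k ≤ (walk head γ x n).2 ⟨head e, hw⟩ := by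
  have hx : x ∉ T := hwalk 0
  have hbal := balancedState_walk (head := head) (γ := γ) hx
  have harr (k : ℕ) : ∃ n, (k : ℤ) ≤ arrivals head γ (walk head γ x n).2 (head e) := by
    obtain ⟨q, hq⟩ := exists_le_signedCount (fun j => head (γ y j) = head e)
      (fun n => by obtain ⟨i, hi, hie⟩ := hγ y e he n; exact ⟨i, hi, by rw [hie]⟩) k
    obtain ⟨n, hn⟩ := hy q
    exact ⟨n, hq.trans ((monotone_signedCount _ hn).trans
      (signedCount_le_arrivals head γ _ (hbal n).1 _))⟩
  by_cases hw : head e ∈ T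
  · obtain ⟨n, hn⟩ := harr 1
    rw [arrivals_walk_eq_zero (fun m _ => hwalk m) hw] at hn
    omega
  refine ⟨hw, fun k => ?_⟩
  obtain ⟨n, hn⟩ := harr (k + 1).toNat
  refine ⟨n, ?_⟩
  have hbal' := (hbal n).2.1 ⟨head e, hw⟩
  have hs := Nat.cast_nonneg (α := ℤ)
    ((Pi.single ⟨x, hx⟩ 1 : {v : V // v ∉ T} → ℕ) ⟨head e, hw⟩)
  have hite : (if (walk head γ x n).1 = head e then (1 : ℤ) else 0) ≤ 1 := by
    split_ifs <;> norm_num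
  have htoNat := Int.self_le_toNat (k + 1)
  linarith

variable (src : E → V)

/-- The vertices left unboundedly often by a walk avoiding `T` would form a nonempty set closed
under arcs and disjoint from `T`, contradicting strong connectivity. -/
lemma Recurrent.terminates (hconn : StronglyConnected src head) (hT : T.Nonempty)
    (hγ : Recurrent src γ) : Terminates head γ := by
  intro x
  suffices ∃ n, (walk head γ x n).1 ∈ T by
    obtain ⟨n, hn⟩ := this
    have hiter := iterate_stepP_shiftC head γ n x 0
    rw [shiftC_zero] at hiter
    exact ⟨n, by rw [hiter]; exact hn⟩
  by_contra! hwalk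
  let U : Set V :=
    {v | ∃ hv : v ∉ T, ∀ k : ℤ, ∃ n, k ≤ (walk head γ x n).2 ⟨v, hv⟩}
  obtain ⟨y, hy⟩ := exists_unbounded_walk hwalk
  have hreach (w : V) : w ∈ U := by
    induction hconn y w with
    | refl => exact ⟨y.2, hy⟩
    | tail _ hstep ih =>
      obtain ⟨e, he, rfl⟩ := hstep
      obtain ⟨hv, hunb⟩ := ih
      exact hγ.unbounded_walk_head hwalk (y := ⟨_, hv⟩) hunb he
  obtain ⟨t, ht⟩ := hT
  exact (hreach t).1 ht

end Termination

section RotorStacks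

variable {V E : Type} [DecidableEq V] [Fintype E] {src : E → V}

lemma IsBiRotorStack.exists_ge_and_exists_le {v : V} {g : ℤ → E}
    (hg : IsBiRotorStack src (outdeg src v) v g) {e : E} (he : src e = v) (n : ℤ) :
    (∃ i, n ≤ i ∧ g i = e) ∧ ∃ i, i ≤ n ∧ g i = e := by
  obtain ⟨hsrc, hper, hcover, -⟩ := hg
  have hd : (0 : ℤ) < outdeg src v := by
    have hmem : g 0 ∈ univ.filter fun e => src e = v := by simp [hsrc 0]
    exact_mod_cast card_pos.2 ⟨_, hmem⟩
  obtain ⟨i₀, -, -, rfl⟩ := hcover e he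
  have hper' : Periodic g (outdeg src v : ℤ) := hper
  have hk := abs_nonneg (n - i₀)
  refine ⟨⟨i₀ + |n - i₀| * outdeg src v, ?_, hper'.int_mul _ i₀⟩,
    ⟨i₀ + -|n - i₀| * outdeg src v, ?_, hper'.int_mul _ i₀⟩⟩
  · nlinarith [le_abs_self (n - i₀)]
  · nlinarith [neg_abs_le (n - i₀)]

variable {T : Finset V} {β : SConf E T}

lemma recurrent_of_isBiRotorStack
    (hβ : ∀ v : {v : V // v ∉ T}, IsBiRotorStack src (outdeg src v.1) v.1 (β v)) :
    Recurrent src β :=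
  fun v _ he n => ((hβ v).exists_ge_and_exists_le he n).1

lemma recurrent_flipC_of_isBiRotorStack
    (hβ : ∀ v : {v : V // v ∉ T}, IsBiRotorStack src (outdeg src v.1) v.1 (β v)) :
    Recurrent src (flipC β) := by
  intro v e he n
  obtain ⟨i, hi, hie⟩ := ((hβ v).exists_ge_and_exists_le he (1 - n)).2
  exact ⟨1 - i, by omega, by simp [flipC, hie]⟩

end RotorStacks

section Equivalence

variable {V E : Type} [Fintype V] [DecidableEq V] {T : Finset V} {head : E → V}

lemma SEquiv.exists_eq_shiftC {β β' : SConf E T}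
    (hβ : ∀ c, Terminates head (shiftC c β)) (hβ' : ∀ c, Terminates head (shiftC c β'))
    (h : SEquiv head T β β') :
    ∃ w, β' = shiftC w β ∧ ∀ v : {v : V // v ∉ T}, arrivals head β w v = w v := by
  obtain ⟨σ, hσ⟩ := h
  obtain ⟨u, hu, hact⟩ := exists_isLeast_actS hβ σ
  obtain ⟨u', hu', hact'⟩ := exists_isLeast_actS hβ' σ
  have hβ'β : β' = shiftC (u - u') β :=
    calc β' = shiftC (-u') (shiftC u' β') := by rw [shiftC_shiftC, neg_add_cancel, shiftC_zero]
      _ = shiftC (-u') (shiftC u β) := by rw [← hact', ← hσ, hact]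
      _ = shiftC (u - u') β := by rw [shiftC_shiftC, neg_add_eq_sub]
  refine ⟨u - u', hβ'β, fun v => ?_⟩
  have h₁ := hu.eq_add_arrivals head β v
  have h₂ := hu'.eq_add_arrivals head β' v
  rw [hβ'β, arrivals_shiftC, add_sub_cancel] at h₂
  simp only [Pi.sub_apply]
  linarith

lemma sub_mem_supersolutions_shiftC {γ : SConf E T} {σ : {v : V // v ∉ T} → ℕ}
    {u w : {v : V // v ∉ T} → ℤ} (hu : IsLeast (supersolutions head γ σ) u)
    (hw : ∀ v : {v : V // v ∉ T}, arrivals head γ w v = w v) (hwσ : ∀ v, w v ≤ σ v) :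
    u - w ∈ supersolutions head (shiftC w γ) σ := by
  refine ⟨fun v => ?_, fun v => ?_⟩
  · have h := hu.eq_add_arrivals head γ v
    have hnn := arrivals_nonneg head γ v hu.1.1
    simp only [Pi.zero_apply, Pi.sub_apply, sub_nonneg]
    linarith [hwσ v]
  · rw [arrivals_shiftC, sub_add_cancel, hw]
    have h := hu.eq_add_arrivals head γ v
    simp only [Pi.sub_apply]
    linarith

/-- For `σ = |w|` the odometers `u` of `γ` and `u'` of `shiftC w γ` bound each other through
`sub_mem_supersolutions_shiftC`, so `u' = u - w` and both routings end in `shiftC u γ`. -/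
lemma sequiv_shiftC {γ : SConf E T} (hγ : ∀ c, Terminates head (shiftC c γ))
    {w : {v : V // v ∉ T} → ℤ} (hw : ∀ v : {v : V // v ∉ T}, arrivals head γ w v = w v) :
    SEquiv head T γ (shiftC w γ) := by
  set σ : {v : V // v ∉ T} → ℕ := fun v => (w v).natAbs
  have hγ' (c : {v : V // v ∉ T} → ℤ) : Terminates head (shiftC c (shiftC w γ)) := by
    rw [shiftC_shiftC]; exact hγ _
  obtain ⟨u, hu, hact⟩ := exists_isLeast_actS hγ σ
  obtain ⟨u', hu', hact'⟩ := exists_isLeast_actS hγ' σ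
  have hw' (v : {v : V // v ∉ T}) : arrivals head (shiftC w γ) (-w) v = (-w) v := by
    rw [arrivals_shiftC, neg_add_cancel, arrivals_zero, hw]; simp
  have hle : u' ≤ u - w :=
    hu'.2 (sub_mem_supersolutions_shiftC hu hw fun v => by simp [σ, le_abs_self])
  have hge : u ≤ u' + w := by
    have h := sub_mem_supersolutions_shiftC hu' hw' fun v => by simp [σ, neg_le_abs]
    rw [shiftC_shiftC, neg_add_cancel, shiftC_zero, sub_neg_eq_add] at h
    exact hu.2 h
  refine ⟨σ, ?_⟩
  rw [hact, hact', shiftC_shiftC]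
  congr 1
  funext v
  have h₁ := hle v
  have h₂ := hge v
  simp only [Pi.add_apply, Pi.sub_apply] at h₁ h₂ ⊢
  linarith

end Equivalence

/-- **Lemma (flipping preserves equivalence).**
If the stack configurations `β ≡ β'` are equivalent (each stack being a bi-infinite
rotor stack), then their flips are equivalent (with respect to the flipped stacks,
which realize the reversed rotor mechanisms): `Φ(β) ≡ Φ(β')`. -/
theorem flip_sequiv {V E : Type} [Fintype V] [DecidableEq V] [Fintype E]
    (src head : E → V) (hconn : StronglyConnected src head)
    (T : Finset V) (hT : T.Nonempty)
    (β β' : SConf E T)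
    (hβ : ∀ v : {v : V // v ∉ T}, IsBiRotorStack src (outdeg src v.1) v.1 (β v))
    (hβ' : ∀ v : {v : V // v ∉ T}, IsBiRotorStack src (outdeg src v.1) v.1 (β' v))
    (h : SEquiv head T β β') :
    SEquiv head T (flipC β) (flipC β') := by
  have hterm {γ : SConf E T} (hγ : Recurrent src γ) (c : {v : V // v ∉ T} → ℤ) :
      Terminates head (shiftC c γ) :=
    (hγ.shiftC c).terminates src hconn hT
  obtain ⟨w, rfl, hw⟩ := h.exists_eq_shiftC (hterm (recurrent_of_isBiRotorStack hβ))
    (hterm (recurrent_of_isBiRotorStack hβ'))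
  rw [flipC_shiftC]
  refine sequiv_shiftC (hterm (recurrent_flipC_of_isBiRotorStack hβ)) fun v => ?_
  rw [arrivals_flipC, neg_neg, hw]
  rfl
end

section
/- For any stack configuration ρ on G and any vertex v ∈ V0: flipping all stacks intertwines particle and antiparticle addition, Φ(E_v^+(ρ)) = E_v^−(Φ(ρ)); moreover the particle started at v with configuration ρ and the antiparticle started at v with configuration Φ(ρ) traverse the same vertex path and hit the same target: t_v^+(ρ) = t_v^−(Φ(ρ)). -/
open Function

/-- **Lemma (flipping intertwines particles and antiparticles).**
For any stack configuration `β` and non-target vertex `v`: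
`Φ(E_v⁺(β)) = E_v⁻(Φ(β))`; the particle started at `v` with configuration `β` and the
antiparticle started at `v` with configuration `Φ(β)` traverse the same vertex path;
and they hit the same target: `t_v⁺(β) = t_v⁻(Φ(β))`. -/
theorem flip_intertwines {V E : Type} [Fintype V] [DecidableEq V] [Fintype E]
    (src head : E → V) (hconn : StronglyConnected src head)
    (T : Finset V) (hT : T.Nonempty)
    (β : SConf E T)
    (hβ : ∀ v : {v : V // v ∉ T}, IsBiRotorStack src (outdeg src v.1) v.1 (β v))
    (v : {v : V // v ∉ T}) :
    flipC (EP head T v β) = EM head T v (flipC β) ∧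
    (∀ n : ℕ, ((stepP head T)^[n] (v.1, β)).1 =
      ((stepM head T)^[n] (v.1, flipC β)).1) ∧
    tP head T v β = tM head T v (flipC β) := by
  classical
  have key : ∀ p : V × SConf E T,
      stepM head T (p.1, flipC p.2) = ((stepP head T p).1, flipC (stepP head T p).2) := by
    intro p
    by_cases h : p.1 ∈ T
    · simp [stepP, stepM, h, flipC]
    · simp only [stepP, stepM, dif_neg h]
      refine Prod.ext ?_ ?_
      · simp [flipC]
      · funext w i
        by_cases hw : w = ⟨p.1, h⟩
        · subst hw
          simp only [flipC, Function.update_self]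
          congr 1
          ring_nf
        · simp [flipC, Function.update_of_ne hw]
  have iter : ∀ n : ℕ, (stepM head T)^[n] (v.1, flipC β) =
      (((stepP head T)^[n] (v.1, β)).1, flipC ((stepP head T)^[n] (v.1, β)).2) := by
    intro n
    induction n with
    | zero => rfl
    | succ n ih =>
      rw [Function.iterate_succ_apply', Function.iterate_succ_apply', ih, key]
  have hcond : (∃ n, ((stepM head T)^[n] (v.1, flipC β)).1 ∈ T) ↔
      (∃ n, ((stepP head T)^[n] (v.1, β)).1 ∈ T) := by
    constructor <;> rintro ⟨n, hn⟩ <;> exact ⟨n, by simpa [iter] using hn⟩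
  have route_eq : routeM head T v.1 (flipC β) =
      ((routeP head T v.1 β).1, flipC (routeP head T v.1 β).2) := by
    unfold routeM routeP
    by_cases h : ∃ n, ((stepP head T)^[n] (v.1, β)).1 ∈ T
    · rw [dif_pos h, dif_pos (hcond.mpr h)]
      have hfind : Nat.find (hcond.mpr h) = Nat.find h := by
        apply le_antisymm
        · exact Nat.find_le (by simpa [iter] using Nat.find_spec h)
        · exact Nat.find_le (by simpa [iter] using Nat.find_spec (hcond.mpr h))
      rw [hfind, iter]
    · rw [dif_neg h, dif_neg (fun hc => h (hcond.mp hc))]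
  refine ⟨?_, ?_, ?_⟩
  · show flipC (routeP head T v.1 β).2 = (routeM head T v.1 (flipC β)).2
    rw [route_eq]
  · intro n
    rw [iter]
  · show (routeP head T v.1 β).1 = (routeM head T v.1 (flipC β)).1
    rw [route_eq]
end
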